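/- arXiv:1908.06390 — 9 statements merged into one kernel-verified Lean document; each statement's English description precedes it below -/
import Mathlib

section
/- Let P be a set of n points in general position in the plane (no three collinear), with n odd and n ≥ 3. If R is a set of points disjoint from P such that every line through two points of P contains a point of R, then |R| ≥ n. -/
/-- The plane. -/
abbrev Pt := Fin 2 → ℝ

/-- A set of points is in general position if no three of its points are collinear. -/
def GenPos (S : Set Pt) : Prop :=
  ∀ x ∈ S, ∀ y ∈ S, ∀ z ∈ S, x ≠ y → x ≠ z → y ≠ z → ¬ Collinear ℝ ({x, y, z} : Set Pt)

/-!
Fix `r ∉ P`. By general position every `x ∈ P` lies on at most one line through `r` and another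
point of `P`, so the ordered pairs of `P` collinear with `r` are at most `n` and come in pairs
`(x, y), (y, x)`; as `n` is odd there are at most `n - 1` of them. Since every one of the
`n (n - 1)` ordered pairs is collinear with some `r ∈ R`, we get `n (n - 1) ≤ |R| (n - 1)`.
-/

open Finset

theorem Finset.even_card_of_involution {α : Type*} {s : Finset α} (f : α → α)
    (hmaps : ∀ x ∈ s, f x ∈ s) (hinv : ∀ x ∈ s, f (f x) = x)
    (hfree : ∀ x ∈ s, f x ≠ x) : Even #s := by
  by_contra hodd
  let σ : Equiv.Perm s :=
    { toFun := fun x => ⟨f x, hmaps x x.2⟩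
      invFun := fun x => ⟨f x, hmaps x x.2⟩
      left_inv := fun x => Subtype.ext (hinv x x.2)
      right_inv := fun x => Subtype.ext (hinv x x.2) }
  have hσ : σ ^ 2 ^ 1 = 1 := Equiv.ext fun x => Subtype.ext (hinv x x.2)
  have hcard : ¬ 2 ∣ Fintype.card s := by
    rwa [Fintype.card_coe, ← even_iff_two_dvd]
  obtain ⟨x, hx⟩ := Equiv.Perm.exists_fixed_point_of_prime (p := 2) hcard hσ
  exact hfree x x.2 (congrArg Subtype.val hx)

theorem GenPos.eq_of_collinear {P : Set Pt} (hgp : GenPos P) {x y z r : Pt}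
    (hx : x ∈ P) (hy : y ∈ P) (hz : z ∈ P) (hr : r ∉ P) (hxy : x ≠ y) (hxz : x ≠ z)
    (hxyr : Collinear ℝ ({x, y, r} : Set Pt)) (hxzr : Collinear ℝ ({x, z, r} : Set Pt)) :
    y = z := by
  by_contra hyz
  have hxr : x ≠ r := fun h => hr (h ▸ hx)
  have hy_line : y ∈ line[ℝ, x, r] :=
    hxyr.mem_affineSpan_of_mem_of_ne (by simp) (by simp) (by simp) hxr
  have hz_line : z ∈ line[ℝ, x, r] :=
    hxzr.mem_affineSpan_of_mem_of_ne (by simp) (by simp) (by simp) hxr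
  have hcol : Collinear ℝ ({y, z, x, r} : Set Pt) :=
    collinear_insert_insert_of_mem_affineSpan_pair hy_line hz_line
  refine hgp x hx y hy z hz hxy hxz hyz (hcol.subset ?_)
  intro p hp
  simp only [Set.mem_insert_iff, Set.mem_singleton_iff] at hp ⊢
  tauto

open Classical in
noncomputable def pairsCollinearWith (P : Finset Pt) (r : Pt) : Finset (Pt × Pt) :=
  P.offDiag.filter fun p => Collinear ℝ ({p.1, p.2, r} : Set Pt)

theorem mem_pairsCollinearWith {P : Finset Pt} {r : Pt} {p : Pt × Pt} :
    p ∈ pairsCollinearWith P r ↔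
      (p.1 ∈ P ∧ p.2 ∈ P ∧ p.1 ≠ p.2) ∧ Collinear ℝ ({p.1, p.2, r} : Set Pt) := by
  simp [pairsCollinearWith]

theorem even_card_pairsCollinearWith (P : Finset Pt) (r : Pt) :
    Even #(pairsCollinearWith P r) := by
  refine Finset.even_card_of_involution Prod.swap (fun p hp => ?_) (fun p _ => p.swap_swap)
    (fun p hp hswap => ?_)
  · obtain ⟨⟨h1, h2, h12⟩, hcol⟩ := mem_pairsCollinearWith.1 hp
    refine mem_pairsCollinearWith.2 ⟨⟨h2, h1, h12.symm⟩, ?_⟩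
    rwa [Prod.fst_swap, Prod.snd_swap, Set.insert_comm]
  · exact (mem_pairsCollinearWith.1 hp).1.2.2 (congrArg Prod.snd hswap)

theorem card_pairsCollinearWith_le {P : Finset Pt} (hgp : GenPos ↑P) {r : Pt} (hr : r ∉ P) :
    #(pairsCollinearWith P r) ≤ #P := by
  have hinj : Set.InjOn Prod.fst (pairsCollinearWith P r : Set (Pt × Pt)) := by
    intro p hp q hq hpq
    obtain ⟨⟨hp1, hp2, hp12⟩, hpc⟩ := mem_pairsCollinearWith.1 hp
    obtain ⟨⟨-, hq2, hq12⟩, hqc⟩ := mem_pairsCollinearWith.1 hq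
    rw [← hpq] at hq12 hqc
    exact Prod.ext hpq (hgp.eq_of_collinear hp1 hp2 hq2 hr hp12 hq12 hpc hqc)
  rw [← card_image_of_injOn hinj]
  refine card_le_card fun x hx => ?_
  obtain ⟨p, hp, rfl⟩ := mem_image.1 hx
  exact (mem_pairsCollinearWith.1 hp).1.1

theorem card_pairsCollinearWith_le_pred {P : Finset Pt} (hgp : GenPos ↑P) (hP : Odd #P)
    {r : Pt} (hr : r ∉ P) : #(pairsCollinearWith P r) ≤ #P - 1 := by
  have := card_pairsCollinearWith_le hgp hr
  have heven := even_card_pairsCollinearWith P r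
  rcases hP with ⟨k, hk⟩
  rcases heven with ⟨m, hm⟩
  omega

theorem stmt0 (n : ℕ) (hodd : Odd n) (hn : 3 ≤ n) (P R : Finset Pt)
    (hPcard : P.card = n) (hgp : GenPos ↑P) (hdisj : Disjoint P R)
    (hpierce : ∀ x ∈ P, ∀ y ∈ P, x ≠ y → ∃ r ∈ R, Collinear ℝ ({x, y, r} : Set Pt)) :
    n ≤ R.card := by
  classical
  subst hPcard
  have hcover : P.offDiag ⊆ R.biUnion (pairsCollinearWith P) := by
    intro p hp
    obtain ⟨h1, h2, h12⟩ := mem_offDiag.1 hp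
    obtain ⟨r, hr, hcol⟩ := hpierce p.1 h1 p.2 h2 h12
    exact mem_biUnion.2 ⟨r, hr, mem_pairsCollinearWith.2 ⟨⟨h1, h2, h12⟩, hcol⟩⟩
  have hcount : #P * (#P - 1) ≤ #R * (#P - 1) :=
    calc #P * (#P - 1) = #P.offDiag := by rw [offDiag_card, Nat.mul_sub_one]
      _ ≤ #(R.biUnion (pairsCollinearWith P)) := card_le_card hcover
      _ ≤ ∑ r ∈ R, #(pairsCollinearWith P r) := card_biUnion_le
      _ ≤ ∑ _r ∈ R, (#P - 1) := sum_le_sum fun r hr =>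
          card_pairsCollinearWith_le_pred hgp hodd (disjoint_right.1 hdisj hr)
      _ = #R * (#P - 1) := by rw [sum_const, smul_eq_mul]
  exact Nat.le_of_mul_le_mul_right hcount (by omega)
end

section
/- Every set of n ≥ 3 points in general position in the plane determines at least n distinct directions, i.e., the lines through pairs of the points have at least n distinct slopes (as points on the projective line of directions). -/
/-!
Let `x` be a vertex of the convex hull of `P`, found as the strict minimiser of a generic linear
functional `ℓ`. By general position the `n - 1` vectors `p - x` are pairwise non-parallel, and they
all lie in the half-plane `ℓ > 0`, where they are ordered by the slope `m / ℓ` for a second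
functional `m`. Let `y` and `z` be the points of smallest and largest slope. The chord `z - y` is
parallel to no `p - x`: otherwise one of `z - x`, `y - x` would be the sum of the other and a
positive multiple of `p - x`, so its slope would be a mediant lying strictly inside the range of
slopes. This gives `n` directions.
-/

open Projectivization

theorem Finset.exists_forall_lt_of_injOn {α β : Type*} [LinearOrder β] {s : Finset α}
    (hs : s.Nonempty) {f : α → β} (hf : Set.InjOn f s) : ∃ x ∈ s, ∀ p ∈ s, p ≠ x → f x < f p := by
  obtain ⟨x, hx, hmin⟩ := s.exists_min_image f hs
  exact ⟨x, hx, fun p hp hpx => (hmin p hp).lt_of_ne fun h => hpx (hf hp hx h.symm)⟩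

theorem collinear_of_sub_eq_smul {K V : Type*} [DivisionRing K] [AddCommGroup V] [Module K V]
    {x p q : V} {c : K} (h : p - x = c • (q - x)) : Collinear K ({x, p, q} : Set V) := by
  rw [Set.insert_comm]
  refine collinear_insert_of_mem_affineSpan_pair ?_
  rw [← sub_add_cancel p x, h]
  exact smul_vsub_vadd_mem_affineSpan_pair c x q

section Directions

variable (K : Type*) {V : Type*} [DivisionRing K] [AddCommGroup V] [Module K V]

def directions (P : Finset V) : Set (Projectivization K V) :=
  {d | ∃ x ∈ P, ∃ y ∈ P, ∃ h : x - y ≠ 0, d = mk K (x - y) h}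

theorem directions_finite (P : Finset V) : (directions K P).Finite := by
  refine (P.finite_toSet.biUnion fun x _ => P.finite_toSet.biUnion fun y _ =>
    Set.Subsingleton.finite (s := {d | ∃ h : x - y ≠ 0, d = mk K (x - y) h}) ?_).subset ?_
  · rintro _ ⟨_, rfl⟩ _ ⟨_, rfl⟩
    rfl
  · rintro d ⟨x, hx, y, hy, h, rfl⟩
    simp only [Set.mem_iUnion]
    exact ⟨x, hx, y, hy, h, rfl⟩

theorem card_le_ncard_directions {P : Finset V} {x y z : V} (hx : x ∈ P) (hy : y ∈ P) (hz : z ∈ P)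
    (hyz : y ≠ z) (hsees : ∀ p ∈ P, ∀ q ∈ P, p ≠ x → q ≠ x → ∀ c : K, p - x = c • (q - x) → p = q)
    (hnew : ∀ p ∈ P, p ≠ x → ∀ c : K, z - y ≠ c • (p - x)) :
    P.card ≤ (directions K P).ncard := by
  classical
  have hQ : ∀ p ∈ P.erase x, p - x ≠ 0 := fun p hp => sub_ne_zero.2 (Finset.ne_of_mem_erase hp)
  let fromX : P.erase x → Projectivization K V := fun p => mk K (p.1 - x) (hQ p.1 p.2)
  have hinj : Function.Injective fromX := by
    rintro ⟨p, hp⟩ ⟨q, hq⟩ hpq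
    obtain ⟨c, hc⟩ := (mk_eq_mk_iff' K _ _ _ _).1 hpq
    rw [Finset.mem_erase] at hp hq
    exact Subtype.ext (hsees p hp.2 q hq.2 hp.1 hq.1 c hc.symm)
  have hzy : z - y ≠ 0 := sub_ne_zero.2 hyz.symm
  have hfresh : mk K (z - y) hzy ∉ (P.erase x).attach.image fromX := by
    simp only [Finset.mem_image, Finset.mem_attach, true_and, not_exists]
    rintro ⟨p, hp⟩ hpx
    obtain ⟨c, hc⟩ := (mk_eq_mk_iff' K _ _ _ _).1 hpx.symm
    rw [Finset.mem_erase] at hp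
    exact hnew p hp.2 hp.1 c hc.symm
  calc P.card = (insert (mk K (z - y) hzy) ((P.erase x).attach.image fromX)).card := by
        rw [Finset.card_insert_of_notMem hfresh, Finset.card_image_of_injective _ hinj,
          Finset.card_attach, Finset.card_erase_add_one hx]
    _ ≤ (directions K P).ncard := by
      rw [← Set.ncard_coe_finset]
      refine Set.ncard_le_ncard ?_ (directions_finite K P)
      intro d hd
      simp only [Finset.coe_insert, Finset.coe_image, Set.mem_insert_iff, Set.mem_image,
        Finset.mem_coe, Finset.mem_attach, true_and] at hd
      rcases hd with rfl | ⟨⟨p, hp⟩, rfl⟩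
      · exact ⟨z, hz, y, hy, hzy, rfl⟩
      · exact ⟨p, Finset.mem_of_mem_erase hp, x, hx, _, rfl⟩

end Directions

section Slopes

variable {K V : Type*} [Field K] [AddCommGroup V] [Module K V] (ℓ m : V →ₗ[K] K)

theorem map_smul_div_map_smul {c : K} (hc : c ≠ 0) (v : V) :
    m (c • v) / ℓ (c • v) = m v / ℓ v := by
  rw [map_smul, map_smul, smul_eq_mul, smul_eq_mul, mul_div_mul_left _ _ hc]

theorem eq_smul_of_div_eq (hlm : ∀ w, ℓ w = 0 → m w = 0 → w = 0) {u v : V} (hu : ℓ u ≠ 0)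
    (hv : ℓ v ≠ 0) (h : m u / ℓ u = m v / ℓ v) : u = (ℓ u / ℓ v) • v := by
  rw [← sub_eq_zero]
  apply hlm
  · simp only [map_sub, map_smul, smul_eq_mul, div_mul_cancel₀ _ hv, sub_self]
  · rw [div_eq_div_iff hu hv] at h
    simp only [map_sub, map_smul, smul_eq_mul]
    field_simp
    linear_combination h

variable [LinearOrder K] [IsStrictOrderedRing K]

theorem add_div_add_lt {a b c d w : K} (hb : 0 < b) (hd : 0 < d) (hab : a / b < w)
    (hcd : c / d ≤ w) : (a + c) / (b + d) < w := by
  rw [div_lt_iff₀ hb] at hab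
  rw [div_le_iff₀ hd] at hcd
  rw [div_lt_iff₀ (add_pos hb hd)]
  linarith

theorem lt_add_div_add {a b c d w : K} (hb : 0 < b) (hd : 0 < d) (hab : w < a / b)
    (hcd : w ≤ c / d) : w < (a + c) / (b + d) := by
  rw [lt_div_iff₀ hb] at hab
  rw [le_div_iff₀ hd] at hcd
  rw [lt_div_iff₀ (add_pos hb hd)]
  linarith

theorem sub_ne_smul_of_slope_extreme {u v w : V} (hu : 0 < ℓ u) (hv : 0 < ℓ v) (hw : 0 < ℓ w)
    (huv : m u / ℓ u < m v / ℓ v) (huw : m u / ℓ u ≤ m w / ℓ w) (hwv : m w / ℓ w ≤ m v / ℓ v)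
    (c : K) : v - u ≠ c • w := by
  intro h
  rcases lt_trichotomy c 0 with hc | rfl | hc
  · have hu' : u = v + (-c) • w := by rw [neg_smul, ← h]; abel
    have hcw : 0 < ℓ ((-c) • w) := by rw [map_smul, smul_eq_mul]; exact mul_pos (neg_pos.2 hc) hw
    have := lt_add_div_add hv hcw huv
      (by rwa [map_smul_div_map_smul ℓ m (neg_ne_zero.2 hc.ne)])
    rw [← map_add, ← map_add, ← hu'] at this
    exact lt_irrefl _ this
  · rw [zero_smul, sub_eq_zero] at h
    exact huv.ne (h ▸ rfl)
  · have hv' : v = u + c • w := by rw [← h]; abel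
    have hcw : 0 < ℓ (c • w) := by rw [map_smul, smul_eq_mul]; exact mul_pos hc hw
    have := add_div_add_lt hu hcw huv
      (by rwa [map_smul_div_map_smul ℓ m hc.ne'])
    rw [← map_add, ← map_add, ← hv'] at this
    exact lt_irrefl _ this

end Slopes

section Extreme

variable {K V : Type*} [Field K] [LinearOrder K] [IsStrictOrderedRing K]
  [AddCommGroup V] [Module K V]

theorem card_le_ncard_directions_of_forall_pos (ℓ m : V →ₗ[K] K)
    (hlm : ∀ w, ℓ w = 0 → m w = 0 → w = 0) {P : Finset V} (hP : 3 ≤ P.card) {x : V} (hx : x ∈ P)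
    (hpos : ∀ p ∈ P, p ≠ x → 0 < ℓ (p - x))
    (hsees : ∀ p ∈ P, ∀ q ∈ P, p ≠ x → q ≠ x → ∀ c : K, p - x = c • (q - x) → p = q) :
    P.card ≤ (directions K P).ncard := by
  classical
  set Q := P.erase x
  have hQ : ∀ p ∈ Q, p ∈ P ∧ p ≠ x := fun p hp =>
    ⟨Finset.mem_of_mem_erase hp, Finset.ne_of_mem_erase hp⟩
  have hQcard : 1 < Q.card := by rw [Finset.card_erase_of_mem hx]; omega
  let σ : V → K := fun p => m (p - x) / ℓ (p - x)
  obtain ⟨y, hyQ, hy⟩ := Q.exists_min_image σ (Finset.card_pos.1 (by omega))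
  obtain ⟨z, hzQ, hz⟩ := Q.exists_max_image σ (Finset.card_pos.1 (by omega))
  have hyz : σ y < σ z := by
    obtain ⟨a, ha, b, hb, hab⟩ := Finset.one_lt_card.1 hQcard
    by_contra! hzy
    have hσ : σ a = σ b :=
      le_antisymm ((hz a ha).trans (hzy.trans (hy b hb))) ((hz b hb).trans (hzy.trans (hy a ha)))
    obtain ⟨haP, hax⟩ := hQ a ha
    obtain ⟨hbP, hbx⟩ := hQ b hb
    exact hab (hsees a haP b hbP hax hbx _
      (eq_smul_of_div_eq ℓ m hlm (hpos a haP hax).ne' (hpos b hbP hbx).ne' hσ))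
  refine card_le_ncard_directions K hx (hQ y hyQ).1 (hQ z hzQ).1 (fun h => hyz.ne (h ▸ rfl)) hsees ?_
  intro p hp hpx c
  have hpQ : p ∈ Q := Finset.mem_erase.2 ⟨hpx, hp⟩
  rw [← sub_sub_sub_cancel_right z y x]
  exact sub_ne_smul_of_slope_extreme ℓ m (hpos y (hQ y hyQ).1 (hQ y hyQ).2)
    (hpos z (hQ z hzQ).1 (hQ z hzQ).2) (hpos p hp hpx) hyz (hy p hpQ) (hz p hpQ) c

end Extreme

theorem GenPos.eq_of_sub_eq_smul {P : Set Pt} (hP : GenPos P) {x p q : Pt} (hx : x ∈ P)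
    (hp : p ∈ P) (hq : q ∈ P) (hpx : p ≠ x) (hqx : q ≠ x) {c : ℝ} (h : p - x = c • (q - x)) :
    p = q :=
  by_contra fun hpq => hP x hx p hp q hq hpx.symm hqx.symm hpq (collinear_of_sub_eq_smul h)

noncomputable def skewProj (t : ℝ) : Pt →ₗ[ℝ] ℝ := LinearMap.proj 0 + t • LinearMap.proj 1

@[simp]
theorem skewProj_apply (t : ℝ) (v : Pt) : skewProj t v = v 0 + t * v 1 := rfl

theorem eq_zero_of_skewProj_eq_zero {t : ℝ} {w : Pt} (h0 : skewProj t w = 0) (h1 : w 1 = 0) :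
    w = 0 := by
  rw [skewProj_apply, h1, mul_zero, add_zero] at h0
  ext i
  fin_cases i <;> simpa

theorem exists_injOn_skewProj (P : Finset Pt) : ∃ t, Set.InjOn (skewProj t) P := by
  classical
  obtain ⟨t, ht⟩ := Infinite.exists_notMem_finset
    ((P ×ˢ P).image fun pq => -(pq.1 0 - pq.2 0) / (pq.1 1 - pq.2 1))
  refine ⟨t, fun p hp q hq hpq => ?_⟩
  rw [← sub_eq_zero, ← map_sub] at hpq
  rw [← sub_eq_zero]
  refine eq_zero_of_skewProj_eq_zero hpq (by_contra fun h1 => ht ?_)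
  refine Finset.mem_image.2 ⟨(p, q), Finset.mem_product.2 ⟨hp, hq⟩, ?_⟩
  rw [skewProj_apply, Pi.sub_apply, Pi.sub_apply] at hpq
  rw [Pi.sub_apply] at h1
  field_simp
  linarith

theorem stmt2 (n : ℕ) (hn : 3 ≤ n) (P : Finset Pt) (hPcard : P.card = n)
    (hgp : GenPos ↑P) :
    n ≤ Set.ncard {d : Projectivization ℝ Pt |
      ∃ x ∈ P, ∃ y ∈ P, ∃ h : x - y ≠ 0, d = Projectivization.mk ℝ (x - y) h} := by
  obtain ⟨t, ht⟩ := exists_injOn_skewProj P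
  obtain ⟨x, hx, hmin⟩ := Finset.exists_forall_lt_of_injOn (Finset.card_pos.1 (by omega)) ht
  subst hPcard
  refine card_le_ncard_directions_of_forall_pos (skewProj t) (LinearMap.proj 1)
    (fun w => eq_zero_of_skewProj_eq_zero) hn hx (fun p hp hpx => ?_)
    (fun p hp q hq hpx hqx _ => hgp.eq_of_sub_eq_smul hx hp hq hpx hqx)
  rw [map_sub, sub_pos]
  exact hmin p hp hpx
end

section
/- Let P be a set of n points in general position and R a set of n points disjoint from P such that for every x, y ∈ P there is a point of R on the line through x and y lying outside the closed segment [x, y]. Then a line through two points of P contains at most two points of R. -/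
/-!
Fix `x ∈ P`. For every other `z ∈ P` pick a point `f z ∈ R` on the line `xz`. Since `f z ≠ x`
and no three points of `P` are collinear, the line `x (f z)` meets `P` only in `x` and `z`, so `f`
is injective and `f z` lies on the line `xy` only for `z = y`. Thus the `n - 1` points `f z`
exhaust `R` up to one point, and at most one of them, `f y`, lies on `xy`.
-/

open Finset

theorem Collinear.collinear_of_collinear_of_ne {k V P : Type*} [Field k] [AddCommGroup V]
    [Module k V] [AddTorsor V P] {x y z r : P} (hxr : x ≠ r)
    (hy : Collinear k ({x, y, r} : Set P)) (hz : Collinear k ({x, z, r} : Set P)) :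
    Collinear k ({x, y, z} : Set P) :=
  collinear_triple_of_mem_affineSpan_pair (left_mem_affineSpan_pair k x r)
    (hy.mem_affineSpan_of_mem_of_ne (by simp) (by simp) (by simp) hxr)
    (hz.mem_affineSpan_of_mem_of_ne (by simp) (by simp) (by simp) hxr)

theorem GenPos.eq_of_collinear_s3 {P : Set Pt} (hgp : GenPos P) {x z z' r : Pt} (hx : x ∈ P)
    (hz : z ∈ P) (hz' : z' ∈ P) (hzx : z ≠ x) (hz'x : z' ≠ x) (hrx : r ≠ x)
    (hzr : Collinear ℝ ({x, z, r} : Set Pt)) (hz'r : Collinear ℝ ({x, z', r} : Set Pt)) :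
    z = z' := by
  by_contra hne
  exact hgp x hx z hz z' hz' hzx.symm hz'x.symm hne
    (hzr.collinear_of_collinear_of_ne hrx.symm hz'r)

theorem Finset.card_filter_add_card_le_of_injOn {α β : Type*} {s : Finset α}
    {t : Finset β} {f : α → β} {p : β → Prop} [DecidablePred p] (hmaps : Set.MapsTo f s t)
    (hinj : Set.InjOn f s) (a₀ : α) (hp : ∀ a ∈ s, p (f a) → a = a₀) :
    #(t.filter p) + #s ≤ #t + 1 := by
  classical
  have himage : s.image f ⊆ t := image_subset_iff.mpr fun a ha => hmaps ha
  have hfilter : t.filter p ⊆ insert (f a₀) (t \ s.image f) := by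
    intro b hb
    obtain ⟨hbt, hpb⟩ := mem_filter.mp hb
    rw [mem_insert, mem_sdiff, mem_image]
    by_cases himg : ∃ a ∈ s, f a = b
    · obtain ⟨a, ha, rfl⟩ := himg
      exact .inl (by rw [hp a ha hpb])
    · exact .inr ⟨hbt, himg⟩
  calc #(t.filter p) + #s
      ≤ #(t \ s.image f) + 1 + #(s.image f) := by
        rw [← card_image_of_injOn hinj]
        gcongr
        exact (card_le_card hfilter).trans (card_insert_le _ _)
    _ = #t + 1 := by
        rw [card_sdiff_of_subset himage]
        have := card_le_card himage
        omega

theorem stmt3 (n : ℕ) (P R : Finset Pt) (hPcard : P.card = n) (hRcard : R.card = n)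
    (hgp : GenPos ↑P) (hdisj : Disjoint P R)
    (hpierce : ∀ x ∈ P, ∀ y ∈ P, x ≠ y →
      ∃ r ∈ R, Collinear ℝ ({x, y, r} : Set Pt) ∧ r ∉ segment ℝ x y) :
    ∀ x ∈ P, ∀ y ∈ P, x ≠ y →
      ({r : Pt | r ∈ R ∧ Collinear ℝ ({x, y, r} : Set Pt)}).ncard ≤ 2 := by
  classical
  intro x hx y hy hxy
  have hrelevant : ∀ z ∈ P.erase x, ∃ r ∈ R, Collinear ℝ ({x, z, r} : Set Pt) := fun z hz =>
    have ⟨r, hr, hcol, _⟩ := hpierce x hx z (mem_of_mem_erase hz) (ne_of_mem_erase hz).symm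
    ⟨r, hr, hcol⟩
  choose! f hfR hfcol using hrelevant
  have hfx : ∀ z ∈ P.erase x, f z ≠ x := fun z hz h =>
    disjoint_left.mp hdisj hx (h ▸ hfR z hz)
  have hinj : ∀ z ∈ P.erase x, ∀ z' ∈ P.erase x, f z = f z' → z = z' :=
    fun z hz z' hz' hff => hgp.eq_of_collinear_s3 hx (mem_of_mem_erase hz) (mem_of_mem_erase hz')
      (ne_of_mem_erase hz) (ne_of_mem_erase hz') (hfx z hz) (hfcol z hz) (hff ▸ hfcol z' hz')
  have hcount := card_filter_add_card_le_of_injOn (t := R) (p := (Collinear ℝ {x, y, ·})) hfR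
    hinj y fun z hz hcol => hgp.eq_of_collinear_s3 hx (mem_of_mem_erase hz) hy
      (ne_of_mem_erase hz) hxy.symm (hfx z hz) (hfcol z hz) hcol
  rw [card_erase_of_mem hx, hPcard, hRcard] at hcount
  have hn : 0 < n := hPcard ▸ card_pos.mpr ⟨x, hx⟩
  rw [← coe_filter, Set.ncard_coe_finset]
  omega
end

section
/- Let P be a set of n points in general position and R a set of n points disjoint from P such that for every x, y ∈ P some point of R lies on line xy outside the segment [x,y]. Then the points of P are in convex position. -/
/-!
Suppose `p ∈ P` lies in the convex hull of `Q = P \ {p}` and move `p` to the origin. General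
position makes the vectors `w - p` (`w ∈ Q`) pairwise non-parallel, so the blockers of the pairs
`(p, w)` are `n - 1` distinct points of `R`, one on each line through `p` and a point of `Q`. As
every open half-plane at `p` meets `Q`, there are two different pairs `a, b ∈ Q` whose closed
double cone at `p` contains `Q`. The blocker of such a pair lies in the open complementary double
cone, which meets none of the lines `pw`, and these complementary cones are disjoint for
different pairs. So `R` has at least `n + 1` points.
-/

open Finset AffineMap
open scoped Pointwise

lemma exists_lineMap_eq_of_collinear {E : Type*} [AddCommGroup E] [Module ℝ E] {x y z : E}
    (hxy : x ≠ y) (hcol : Collinear ℝ ({x, y, z} : Set E)) (hz : z ∉ segment ℝ x y) :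
    ∃ t : ℝ, t * (1 - t) < 0 ∧ lineMap x y t = z := by
  obtain ⟨t, rfl⟩ := mem_affineSpan_pair_iff_exists_lineMap_eq.1
    (hcol.mem_affineSpan_of_mem_of_ne (p₃ := z) (by simp) (by simp) (by simp) hxy)
  refine ⟨t, ?_, rfl⟩
  rw [segment_eq_image_lineMap] at hz
  have ht : t ∉ Set.Icc (0 : ℝ) 1 := fun ht => hz ⟨t, ht, rfl⟩
  rw [Set.mem_Icc, not_and_or, not_le, not_le] at ht
  rcases ht with ht | ht <;> nlinarith

lemma zero_mem_convexHull_image_sub {E : Type*} [AddCommGroup E] [Module ℝ E] [DecidableEq E]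
    {s : Finset E} {p : E} (h : p ∈ convexHull ℝ (s : Set E)) :
    (0 : E) ∈ convexHull ℝ (s.image (· - p) : Set E) := by
  have : ((s.image (· - p) : Finset E) : Set E) = -p +ᵥ (s : Set E) := by
    rw [coe_image, ← Set.image_vadd]
    congr 1
    funext x
    rw [vadd_eq_add, sub_eq_neg_add]
  rw [this, convexHull_vadd]
  exact Set.mem_vadd_set.2 ⟨p, h, by simp⟩

lemma dotProduct_self_pos {ι : Type*} [Fintype ι] {u : ι → ℝ} (hu : u ≠ 0) : 0 < u ⬝ᵥ u :=
  lt_of_le_of_ne (Finset.sum_nonneg fun i _ => mul_self_nonneg (u i))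
    (Ne.symm (dotProduct_self_eq_zero.not.2 hu))

lemma Finset.exists_max_neg_and_succ {α : Type*} (S : Finset α) (c g : α → ℝ)
    (hg : ∀ w ∈ S, g w ≠ 0) (hneg : ∃ w ∈ S, g w < 0) :
    ∃ y ∈ S, g y < 0 ∧ (∀ w ∈ S, g w < 0 → c w ≤ c y) ∧
      ((∀ w ∈ S, c w ≤ c y) ∨
        ∃ x ∈ S, 0 < g x ∧ c y < c x ∧ ∀ w ∈ S, c w ≤ c y ∨ c x ≤ c w) := by
  obtain ⟨y, hy, hymax⟩ := (S.filter (g · < 0)).exists_max_image c (filter_nonempty_iff.2 hneg)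
  rw [mem_filter] at hy
  have hymax' : ∀ w ∈ S, g w < 0 → c w ≤ c y := fun w hw hgw => hymax w (mem_filter.2 ⟨hw, hgw⟩)
  refine ⟨y, hy.1, hy.2, hymax', ?_⟩
  by_cases htop : ∀ w ∈ S, c w ≤ c y
  · exact Or.inl htop
  push Not at htop
  obtain ⟨x, hx, hxmin⟩ := (S.filter (c y < c ·)).exists_min_image c (filter_nonempty_iff.2 htop)
  rw [mem_filter] at hx
  refine Or.inr ⟨x, hx.1, ?_, hx.2, fun w hw => ?_⟩
  · exact (hg x hx.1).lt_or_gt.resolve_left fun h => (hymax' x hx.1 h).not_gt hx.2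
  · by_cases hyw : c y < c w
    · exact Or.inr (hxmin w (mem_filter.2 ⟨hw, hyw⟩))
    · exact Or.inl (not_lt.1 hyw)

namespace Pt

noncomputable def cross (u v : Pt) : ℝ := u 0 * v 1 - u 1 * v 0

lemma cross_self (u : Pt) : cross u u = 0 := by
  simp only [cross]; ring

lemma cross_anticomm (u v : Pt) : cross v u = -cross u v := by
  simp only [cross]; ring

lemma cross_smul_left (t : ℝ) (u v : Pt) : cross (t • u) v = t * cross u v := by
  simp only [cross, Pi.smul_apply, smul_eq_mul]; ring

lemma cross_smul_right (t : ℝ) (u v : Pt) : cross u (t • v) = t * cross u v := by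
  simp only [cross, Pi.smul_apply, smul_eq_mul]; ring

lemma exists_eq_smul_of_cross_eq_zero {u w : Pt} (hu : u ≠ 0) (h : cross u w = 0) :
    ∃ t : ℝ, w = t • u := by
  have key : ∀ i, u i • w = w i • u := by
    intro i
    ext j
    fin_cases i <;> fin_cases j <;> simp [cross] at h ⊢ <;> linarith
  obtain ⟨i, hi⟩ : ∃ i, u i ≠ 0 := by
    by_contra! h0
    exact hu (funext h0)
  exact ⟨w i / u i, by rw [div_eq_inv_mul, mul_smul, ← key i, smul_smul, inv_mul_cancel₀ hi,
    one_smul]⟩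

lemma cross_eq_zero_of_cross_eq_zero {v x y : Pt} (hv : v ≠ 0) (hx : cross v x = 0)
    (hy : cross v y = 0) : cross x y = 0 := by
  obtain ⟨s, rfl⟩ := exists_eq_smul_of_cross_eq_zero hv hx
  obtain ⟨t, rfl⟩ := exists_eq_smul_of_cross_eq_zero hv hy
  rw [cross_smul_left, cross_smul_right, cross_self, mul_zero, mul_zero]

lemma collinear_of_cross_sub_eq_zero {p a b : Pt} (ha : a ≠ p) (h : cross (a - p) (b - p) = 0) :
    Collinear ℝ ({p, a, b} : Set Pt) := by
  obtain ⟨t, ht⟩ := exists_eq_smul_of_cross_eq_zero (sub_ne_zero.2 ha) h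
  rw [collinear_iff_of_mem (Set.mem_insert p _)]
  refine ⟨a - p, ?_⟩
  simp only [Set.mem_insert_iff, Set.mem_singleton_iff, vadd_eq_add]
  rintro q (rfl | rfl | rfl)
  · exact ⟨0, by simp⟩
  · exact ⟨1, by simp⟩
  · exact ⟨t, by rw [← ht, sub_add_cancel]⟩

def PairwiseIndependent (V : Finset Pt) : Prop :=
  (V : Set Pt).Pairwise fun x y => cross x y ≠ 0

def SurroundsOrigin (V : Finset Pt) : Prop :=
  ∀ v ≠ 0, ∃ w ∈ V, 0 < cross v w

lemma pairwiseIndependent_image_sub {P : Finset Pt} {p : Pt} (hgp : GenPos ↑P) (hp : p ∈ P) :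
    PairwiseIndependent ((P.erase p).image (· - p)) := by
  rw [PairwiseIndependent]
  simp only [coe_image, coe_erase]
  rintro _ ⟨a, ⟨ha, hap⟩, rfl⟩ _ ⟨b, ⟨hb, hbp⟩, rfl⟩ hab h
  exact hgp p hp a ha b hb (Ne.symm hap) (Ne.symm hbp) (fun h => hab (by rw [h]))
    (collinear_of_cross_sub_eq_zero hap h)

lemma surroundsOrigin_of_zero_mem_convexHull {V : Finset Pt} (hV : PairwiseIndependent V)
    (h0 : (0 : Pt) ∈ convexHull ℝ (V : Set Pt)) (h0V : (0 : Pt) ∉ V) : SurroundsOrigin V := by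
  intro v hv
  obtain ⟨μ, hμ0, hμ1, hsum⟩ := Finset.mem_convexHull'.1 h0
  by_contra! hle
  have hcross : ∑ w ∈ V, μ w * cross v w = 0 := by
    have := congrArg (cross v) hsum
    simpa [cross, Finset.sum_apply, Finset.mul_sum, mul_sub, Finset.sum_sub_distrib,
      mul_left_comm] using this
  have hzero := (sum_eq_zero_iff_of_nonpos fun w hw =>
    mul_nonpos_of_nonneg_of_nonpos (hμ0 w hw) (hle w hw)).1 hcross
  obtain ⟨y, hy, hμy⟩ := exists_ne_zero_of_sum_ne_zero (hμ1.symm ▸ one_ne_zero)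
  have hvy : cross v y = 0 := (mul_eq_zero.1 (hzero y hy)).resolve_left hμy
  -- all the weight sits on `y`, as the other vectors are not parallel to `v`
  have hsupp : ∀ w ∈ V, w ≠ y → μ w = 0 := fun w hw hwy => by
    by_contra hμw
    exact hV hw hy hwy (cross_eq_zero_of_cross_eq_zero hv
      ((mul_eq_zero.1 (hzero w hw)).resolve_left hμw) hvy)
  rw [sum_eq_single y (fun w hw hwy => by rw [hsupp w hw hwy, zero_smul])
    (fun h => absurd hy h)] at hsum
  exact h0V ((smul_eq_zero.1 hsum).resolve_left hμy ▸ hy)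

/-- For independent `a` and `b`, `wedge a b w` is positive iff `w` lies in the open double cone
`{s • a + t • b | s * t > 0}`, and zero iff `w` is parallel to `a` or `b`. -/
noncomputable def wedge (a b w : Pt) : ℝ := cross a w * cross w b

lemma wedge_smul (a b w : Pt) (t : ℝ) : wedge a b (t • w) = t ^ 2 * wedge a b w := by
  simp only [wedge, cross_smul_left, cross_smul_right]; ring

lemma wedge_lineMap (a b c d : Pt) (t : ℝ) :
    wedge a b (lineMap c d t) = (1 - t) ^ 2 * wedge a b c + t ^ 2 * wedge a b d +
      t * (1 - t) * (cross a c * cross d b + cross a d * cross c b) := by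
  simp only [wedge, cross, lineMap_apply_module, Pi.add_apply, Pi.smul_apply, smul_eq_mul]
  ring

lemma wedge_lineMap_self (a b : Pt) (t : ℝ) :
    wedge a b (lineMap a b t) = t * (1 - t) * cross a b ^ 2 := by
  rw [wedge_lineMap, wedge, wedge, cross_self, cross_self, cross_anticomm b a]
  ring

def IsBoundingPair (V : Finset Pt) (a b : Pt) : Prop :=
  a ∈ V ∧ b ∈ V ∧ a ≠ b ∧ ∀ w ∈ V, 0 ≤ wedge a b w

lemma IsBoundingPair.symm {V : Finset Pt} {a b : Pt} (hab : IsBoundingPair V a b) :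
    IsBoundingPair V b a := by
  obtain ⟨ha, hb, hne, h⟩ := hab
  refine ⟨hb, ha, hne.symm, fun w hw => ?_⟩
  have := h w hw
  rw [wedge] at this
  rw [wedge, cross_anticomm w b, cross_anticomm a w]
  linarith

section BoundingPair

variable {V : Finset Pt} {a b c d : Pt} {t : ℝ}

lemma IsBoundingPair.wedge_lineMap_neg (hV : PairwiseIndependent V)
    (hab : IsBoundingPair V a b) (ht : t * (1 - t) < 0) : wedge a b (lineMap a b t) < 0 := by
  rw [wedge_lineMap_self]
  exact mul_neg_of_neg_of_pos ht (sq_pos_of_ne_zero (hV hab.1 hab.2.1 hab.2.2.1))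

lemma IsBoundingPair.lineMap_ne_smul (hV : PairwiseIndependent V)
    (hab : IsBoundingPair V a b) (ht : t * (1 - t) < 0) {w : Pt} (hw : w ∈ V) (τ : ℝ) :
    lineMap a b t ≠ τ • w := by
  intro h
  have hneg := hab.wedge_lineMap_neg hV ht
  rw [h, wedge_smul] at hneg
  nlinarith [hab.2.2.2 w hw, sq_nonneg τ]

/-- Along the line through `c` and `d`, `wedge a b` is a quadratic whose cross term must be
positive outside `[c, d]`; together with the sign conditions of both pairs this forces `a` to be
parallel to `c` or `d`. -/
lemma IsBoundingPair.eq_or_eq_of_wedge_lineMap_neg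
    (hV : PairwiseIndependent V) (hab : IsBoundingPair V a b)
    (hcd : IsBoundingPair V c d) (ht : t * (1 - t) < 0) (h : wedge a b (lineMap c d t) < 0) :
    a = c ∨ a = d := by
  obtain ⟨ha, -, -, hVab⟩ := hab
  obtain ⟨hc, hd, -, hVcd⟩ := hcd
  have hWc := hVab c hc
  have hWd := hVab d hd
  have hWa := hVcd a ha
  rw [wedge_lineMap] at h
  have hsum : 0 < cross a c * cross d b + cross a d * cross c b := by
    by_contra! hle
    nlinarith [mul_nonneg (sq_nonneg (1 - t)) hWc, mul_nonneg (sq_nonneg t) hWd,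
      mul_nonneg_of_nonpos_of_nonpos ht.le hle]
  by_contra! hne
  have hcd_sign : cross a c * cross a d < 0 := by
    rw [wedge, cross_anticomm a c] at hWa
    exact lt_of_le_of_ne (by linarith) (mul_ne_zero (hV ha hc hne.1) (hV ha hd hne.2))
  rw [wedge] at hWc hWd
  by_cases h1 : 0 < cross a c * cross d b
  · nlinarith [mul_neg_of_neg_of_pos hcd_sign h1, mul_nonneg hWd (sq_nonneg (cross a c))]
  · have h2 : 0 < cross a d * cross c b := by linarith
    nlinarith [mul_neg_of_neg_of_pos hcd_sign h2, mul_nonneg hWc (sq_nonneg (cross a d))]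

end BoundingPair

noncomputable def cotAngle (u w : Pt) : ℝ := u ⬝ᵥ w / cross u w

lemma dotProduct_self_mul_cross {u x y : Pt} (hx : cross u x ≠ 0) (hy : cross u y ≠ 0) :
    u ⬝ᵥ u * cross x y = cross u x * cross u y * (cotAngle u x - cotAngle u y) := by
  rw [cotAngle, cotAngle]
  field_simp
  simp only [dotProduct, Fin.sum_univ_two, cross]
  ring

section CotAngle

variable {V : Finset Pt} {u : Pt}

lemma isBoundingPair_of_cotAngle_extremal (hV : PairwiseIndependent V) (hu : u ∈ V) {z : Pt}
    (hz : z ∈ V.erase u) (h : ∀ w ∈ V.erase u, 0 ≤ cross u z * (cotAngle u w - cotAngle u z)) :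
    IsBoundingPair V u z := by
  obtain ⟨hzu, hz⟩ := mem_erase.1 hz
  refine ⟨hu, hz, hzu.symm, fun w hw => ?_⟩
  by_cases hwu : w = u
  · rw [hwu, wedge, cross_self, zero_mul]
  have huz := hV hu hz hzu.symm
  have huw := hV hu hw (Ne.symm hwu)
  have hu0 : u ≠ 0 := by rintro rfl; simp [cross] at huz
  refine nonneg_of_mul_nonneg_right ?_ (dotProduct_self_pos hu0)
  rw [wedge, mul_left_comm, dotProduct_self_mul_cross huw huz]
  nlinarith [mul_nonneg (sq_nonneg (cross u w)) (h w (mem_erase.2 ⟨hwu, hw⟩))]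

lemma isBoundingPair_of_cotAngle_adjacent (hV : PairwiseIndependent V) (hu : u ∈ V) {x y : Pt}
    (hx : x ∈ V.erase u) (hy : y ∈ V.erase u) (hxy : cross u x * cross u y < 0)
    (h : ∀ w ∈ V.erase u, (cotAngle u x - cotAngle u w) * (cotAngle u w - cotAngle u y) ≤ 0) :
    IsBoundingPair V x y := by
  obtain ⟨hxu, hx⟩ := mem_erase.1 hx
  obtain ⟨hyu, hy⟩ := mem_erase.1 hy
  have hne : x ≠ y := by rintro rfl; nlinarith [sq_nonneg (cross u x)]
  refine ⟨hx, hy, hne, fun w hw => ?_⟩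
  by_cases hwu : w = u
  · rw [hwu, wedge, cross_anticomm u x]
    linarith
  have hux := hV hu hx hxu.symm
  have huy := hV hu hy hyu.symm
  have huw := hV hu hw (Ne.symm hwu)
  have hu0 : u ≠ 0 := by rintro rfl; simp [cross] at hux
  refine nonneg_of_mul_nonneg_right ?_ (pow_pos (dotProduct_self_pos hu0) 2)
  rw [wedge, show ∀ k m n : ℝ, k ^ 2 * (m * n) = (k * m) * (k * n) by intros; ring,
    dotProduct_self_mul_cross hux huw, dotProduct_self_mul_cross huw huy]
  nlinarith [mul_nonpos_of_nonpos_of_nonneg (mul_nonpos_of_nonpos_of_nonneg hxy.le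
    (sq_nonneg (cross u w))) (neg_nonneg.2 (h w (mem_erase.2 ⟨hwu, hw⟩)))]

lemma not_cotAngle_separated (hV : PairwiseIndependent V) (hsurr : SurroundsOrigin V)
    (hu : u ∈ V) (hu0 : u ≠ 0) {s₁ s₂ : ℝ} (hs : s₁ < s₂)
    (hneg : ∀ w ∈ V.erase u, cross u w < 0 → cotAngle u w ≤ s₁)
    (hpos : ∀ w ∈ V.erase u, 0 < cross u w → s₂ ≤ cotAngle u w) : False := by
  obtain ⟨s, hs₁, hs₂⟩ := exists_between hs
  -- `v` is `s • u` plus `u` rotated by a quarter turn; no vector of `V` lies strictly to its left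
  set v : Pt := ![s * u 0 - u 1, s * u 1 + u 0]
  have hv : ∀ w, cross v w = s * cross u w - u ⬝ᵥ w := fun w => by
    simp only [v, cross, dotProduct, Fin.sum_univ_two, Matrix.cons_val_zero, Matrix.cons_val_one]
    ring
  have hvu : cross v u < 0 := by
    rw [hv, cross_self, mul_zero, zero_sub, neg_neg_iff_pos]
    exact dotProduct_self_pos hu0
  obtain ⟨w, hw, hvw⟩ := hsurr v (by rintro hv0; simp [hv0, cross] at hvu)
  have hwu : w ≠ u := by rintro rfl; linarith
  have huw := hV hu hw hwu.symm
  have hw' := mem_erase.2 ⟨hwu, hw⟩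
  rw [hv, show u ⬝ᵥ w = cross u w * cotAngle u w by rw [cotAngle, mul_div_cancel₀ _ huw]] at hvw
  rcases huw.lt_or_gt with h | h
  · have : 0 < s - cotAngle u w := by linarith [hneg w hw' h]
    nlinarith [mul_neg_of_neg_of_pos h this]
  · have : s - cotAngle u w < 0 := by linarith [hpos w hw' h]
    nlinarith [mul_neg_of_pos_of_neg h this]

end CotAngle

/-- Sort `V \ {u}` by `cotAngle u`, with the direction of `u` placed at infinity. The last vector on
the negative side of `u` and the first vector on the positive side each span a bounding pair with
their successor (resp. predecessor), or with `u` if there is none. These two pairs coincide only if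
the negative side lies entirely before the positive side, which would put `V` in a half-plane. -/
theorem exists_two_isBoundingPair {V : Finset Pt}
    (hV : PairwiseIndependent V) (hsurr : SurroundsOrigin V) :
    ∃ a b c d, IsBoundingPair V a b ∧ IsBoundingPair V c d ∧ c ≠ a ∧ c ≠ b := by
  obtain ⟨v, hv⟩ := exists_ne (0 : Pt)
  obtain ⟨u, hu, huv⟩ := hsurr v hv
  have hu0 : u ≠ 0 := by rintro rfl; simp [cross] at huv
  have hS : ∀ w ∈ V.erase u, cross u w ≠ 0 := fun w hw =>
    hV hu (mem_of_mem_erase hw) (ne_of_mem_erase hw).symm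
  have hside : ∀ ε : ℝ, ε ≠ 0 → ∃ w ∈ V.erase u, ε * cross u w < 0 := by
    intro ε hε
    obtain ⟨w, hw, hpos⟩ := hsurr (-ε • u) (smul_ne_zero (neg_ne_zero.2 hε) hu0)
    rw [cross_smul_left] at hpos
    have hwu : w ≠ u := by rintro rfl; simp [cross_self] at hpos
    exact ⟨w, mem_erase.2 ⟨hwu, hw⟩, by linarith⟩
  obtain ⟨y₁, hy₁, hy₁neg, hy₁max, hy₁next⟩ := (V.erase u).exists_max_neg_and_succ
    (cotAngle u) (cross u) hS (by simpa using hside 1 one_ne_zero)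
  obtain ⟨y₂, hy₂, hy₂pos, hy₂min, hy₂next⟩ := (V.erase u).exists_max_neg_and_succ
    (fun w => -cotAngle u w) (fun w => -cross u w) (fun w hw => neg_ne_zero.2 (hS w hw))
    (by simpa using hside (-1) (by norm_num))
  simp only [neg_lt_zero, neg_le_neg_iff, neg_pos, neg_lt_neg_iff] at hy₂pos hy₂min hy₂next
  have hy₂y₁ : y₂ ≠ y₁ := by rintro rfl; linarith
  obtain ⟨d, hcd⟩ : ∃ d, IsBoundingPair V y₂ d := by
    rcases hy₂next with htop | ⟨x, hx, hxneg, hxy, hadj⟩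
    · exact ⟨u, (isBoundingPair_of_cotAngle_extremal hV hu hy₂ fun w hw =>
        mul_nonneg hy₂pos.le (sub_nonneg.2 (htop w hw))).symm⟩
    · refine ⟨x, isBoundingPair_of_cotAngle_adjacent hV hu hy₂ hx
        (mul_neg_of_pos_of_neg hy₂pos hxneg) fun w hw => ?_⟩
      rcases hadj w hw with h | h <;> nlinarith
  rcases hy₁next with htop | ⟨x, hx, hxpos, hxy, hadj⟩
  · exact ⟨u, y₁, y₂, d, isBoundingPair_of_cotAngle_extremal hV hu hy₁ (fun w hw =>
      mul_nonneg_of_nonpos_of_nonpos hy₁neg.le (sub_nonpos.2 (htop w hw))), hcd,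
      ne_of_mem_erase hy₂, hy₂y₁⟩
  refine ⟨x, y₁, y₂, d, isBoundingPair_of_cotAngle_adjacent hV hu hx hy₁
    (mul_neg_of_pos_of_neg hxpos hy₁neg) fun w hw => ?_, hcd, ?_, hy₂y₁⟩
  · rcases hadj w hw with h | h <;> nlinarith
  · rintro rfl
    exact not_cotAngle_separated hV hsurr hu hu0 hxy hy₁max hy₂min

theorem card_add_two_le_card {V R : Finset Pt}
    (hV : PairwiseIndependent V) (hsurr : SurroundsOrigin V)
    (hstar : ∀ w ∈ V, ∃ τ : ℝ, τ ≠ 0 ∧ τ • w ∈ R)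
    (hpair : ∀ a ∈ V, ∀ b ∈ V, a ≠ b → ∃ t : ℝ, t * (1 - t) < 0 ∧ lineMap a b t ∈ R) :
    #V + 2 ≤ #R := by
  choose! τ hτ0 hτR using hstar
  set T := V.image fun w => τ w • w
  have hT : #T = #V := card_image_of_injOn fun w hw w' hw' h => by
    by_contra hne
    have := congrArg (cross w) h
    simp only [cross_smul_right, cross_self, mul_zero] at this
    exact hV hw hw' hne ((mul_eq_zero.1 this.symm).resolve_left (hτ0 w' hw'))
  have hnotT : ∀ {x y : Pt} {r : ℝ}, IsBoundingPair V x y → r * (1 - r) < 0 →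
      lineMap x y r ∉ T := by
    intro x y r hxy hr hmem
    obtain ⟨w, hw, hweq⟩ := mem_image.1 hmem
    exact hxy.lineMap_ne_smul hV hr hw (τ w) hweq.symm
  obtain ⟨a, b, c, d, hab, hcd, hca, hcb⟩ := exists_two_isBoundingPair hV hsurr
  obtain ⟨s, hs, hsR⟩ := hpair a hab.1 b hab.2.1 hab.2.2.1
  obtain ⟨t, ht, htR⟩ := hpair c hcd.1 d hcd.2.1 hcd.2.2.1
  have hst : lineMap a b s ≠ lineMap c d t := fun h =>
    (hcd.eq_or_eq_of_wedge_lineMap_neg hV hab hs (h ▸ hcd.wedge_lineMap_neg hV ht)).elim hca hcb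
  calc #V + 2 = #(insert (lineMap a b s) (insert (lineMap c d t) T)) := by
        rw [card_insert_of_notMem (by simp [hst, hnotT hab hs]),
          card_insert_of_notMem (hnotT hcd ht), hT]
    _ ≤ #R := card_le_card (insert_subset hsR (insert_subset htR (image_subset_iff.2 hτR)))

end Pt

theorem stmt5_general (n : ℕ) (P R : Finset Pt) (hPcard : P.card = n) (hRcard : R.card = n)
    (hgp : GenPos ↑P)
    (hpierce : ∀ x ∈ P, ∀ y ∈ P, x ≠ y →
      ∃ r ∈ R, Collinear ℝ ({x, y, r} : Set Pt) ∧ r ∉ segment ℝ x y) :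
    ∀ x ∈ P, x ∉ convexHull ℝ ((↑P : Set Pt) \ {x}) := by
  intro p hp hhull
  have hblock : ∀ a ∈ P, ∀ b ∈ P, a ≠ b →
      ∃ t : ℝ, t * (1 - t) < 0 ∧ lineMap (a - p) (b - p) t ∈ R.image (· - p) := by
    intro a ha b hb hab
    obtain ⟨z, hz, hcol, hseg⟩ := hpierce a ha b hb hab
    obtain ⟨t, ht, rfl⟩ := exists_lineMap_eq_of_collinear hab hcol hseg
    exact ⟨t, ht, mem_image.2 ⟨_, hz, by simpa using lineMap_vsub_lineMap a b p p t⟩⟩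
  have hV := Pt.pairwiseIndependent_image_sub hgp hp
  have hsurr := Pt.surroundsOrigin_of_zero_mem_convexHull hV
    (zero_mem_convexHull_image_sub (by rwa [coe_erase])) (by simp [sub_eq_zero])
  have key := Pt.card_add_two_le_card (R := R.image (· - p)) hV hsurr ?_ ?_
  · rw [card_image_of_injective _ sub_left_injective, card_erase_of_mem hp,
      card_image_of_injective _ sub_left_injective] at key
    omega
  · simp only [mem_image, mem_erase, forall_exists_index, and_imp]
    rintro _ w hwp hw rfl
    obtain ⟨t, ht, hmem⟩ := hblock p hp w hw (Ne.symm hwp)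
    exact ⟨t, by rintro rfl; simp at ht, by simpa [lineMap_apply_module] using hmem⟩
  · simp only [mem_image, mem_erase, forall_exists_index, and_imp]
    rintro _ a - ha rfl _ b - hb rfl hab
    simpa only [mem_image] using hblock a ha b hb (fun h => hab (by rw [h]))

theorem stmt5 (n : ℕ) (P R : Finset Pt) (hPcard : P.card = n) (hRcard : R.card = n)
    (hgp : GenPos ↑P) (hdisj : Disjoint P R)
    (hpierce : ∀ x ∈ P, ∀ y ∈ P, x ≠ y →
      ∃ r ∈ R, Collinear ℝ ({x, y, r} : Set Pt) ∧ r ∉ segment ℝ x y) :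
    ∀ x ∈ P, x ∉ convexHull ℝ ((↑P : Set Pt) \ {x}) :=
  stmt5_general n P R hPcard hRcard hgp hpierce
end

section
/- Let x_0, …, x_{n−1} and r_0, …, r_{n−1} be points in the plane such that x_i, x_j, r_k are collinear whenever i + j + k ≡ 0 (mod n), with the nine points x_{n−1−i}, …, x_{n−6−i}, r_{5+2i}, r_{7+2i}, r_{9+2i} pairwise distinct and the relevant six lines distinct. Then any cubic curve passing through eight of the nine points x_{n−1−i}, x_{n−2−i}, …, x_{n−6−i}, r_{5+2i}, r_{7+2i}, r_{9+2i} passes through all nine. -/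
/-- The set of points collinear with `a` and `b` (the line through `a` and `b`
when `a ≠ b`). -/
def lineThrough (a b : Pt) : Set Pt := {q : Pt | Collinear ℝ ({a, b, q} : Set Pt)}

open MvPolynomial

noncomputable def lineEq (u v : Pt) : MvPolynomial (Fin 2) ℝ :=
  C (v 0 - u 0) * (X 1 - C (u 1)) - C (v 1 - u 1) * (X 0 - C (u 0))

lemma eval_lineEq (u v z : Pt) :
    eval z (lineEq u v) = (v 0 - u 0) * (z 1 - u 1) - (v 1 - u 1) * (z 0 - u 0) := by
  simp [lineEq]

lemma totalDegree_lineEq_le (u v : Pt) : (lineEq u v).totalDegree ≤ 1 := by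
  unfold lineEq
  refine (totalDegree_sub _ _).trans (max_le ?_ ?_) <;>
  · refine (totalDegree_mul _ _).trans ?_
    rw [totalDegree_C, zero_add]
    exact (totalDegree_sub _ _).trans (by simp [totalDegree_X])

@[simp] lemma left_mem_lineThrough (u v : Pt) : u ∈ lineThrough u v := by
  simp [lineThrough, collinear_pair]

@[simp] lemma right_mem_lineThrough (u v : Pt) : v ∈ lineThrough u v := by
  simp [lineThrough, collinear_pair]

lemma lineThrough_eq_affineSpan {u v : Pt} (huv : u ≠ v) :
    lineThrough u v = (line[ℝ, u, v] : Set Pt) := by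
  ext z
  refine ⟨fun h => h.mem_affineSpan_of_mem_of_ne (by simp) (by simp) (by simp) huv, fun h => ?_⟩
  have := collinear_insert_of_mem_affineSpan_pair h
  rwa [Set.insert_comm, Set.pair_comm] at this

lemma eval_lineEq_eq_zero_iff {u v : Pt} (huv : u ≠ v) {z : Pt} :
    eval z (lineEq u v) = 0 ↔ z ∈ lineThrough u v := by
  rw [lineThrough_eq_affineSpan huv, SetLike.mem_coe, mem_affineSpan_pair_iff_exists_lineMap_eq,
    eval_lineEq]
  constructor
  · intro h
    by_cases h0 : v 0 = u 0
    · have h1 : v 1 - u 1 ≠ 0 := fun h1 => huv (funext fun j => by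
        fin_cases j <;> simp <;> linarith)
      refine ⟨(z 1 - u 1) / (v 1 - u 1), funext fun j => ?_⟩
      rw [h0, sub_self, zero_mul, zero_sub, neg_eq_zero] at h
      fin_cases j <;> simp [AffineMap.lineMap_apply_module', h0]
      · linarith [(mul_eq_zero.mp h).resolve_left h1]
      · field_simp
        ring
    · have h0' : v 0 - u 0 ≠ 0 := sub_ne_zero.mpr h0
      refine ⟨(z 0 - u 0) / (v 0 - u 0), funext fun j => ?_⟩
      fin_cases j <;> simp [AffineMap.lineMap_apply_module'] <;> field_simp
      · ring
      · linarith
  · rintro ⟨t, rfl⟩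
    simp [AffineMap.lineMap_apply_module']
    ring

def IsLine (S : Set Pt) : Prop := ∃ u v : Pt, u ≠ v ∧ S = lineThrough u v

lemma isLine_lineThrough {u v : Pt} (huv : u ≠ v) : IsLine (lineThrough u v) := ⟨u, v, huv, rfl⟩

namespace IsLine

variable {S T : Set Pt}

lemma eq_lineThrough (hS : IsLine S) {u v : Pt} (huv : u ≠ v) (hu : u ∈ S) (hv : v ∈ S) :
    S = lineThrough u v := by
  obtain ⟨a, b, hab, rfl⟩ := hS
  rw [lineThrough_eq_affineSpan hab] at hu hv ⊢
  have hc := collinear_insert_insert_of_mem_affineSpan_pair hu hv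
  rw [lineThrough_eq_affineSpan huv, hc.affineSpan_eq_of_ne (by simp) (by simp) huv,
    hc.affineSpan_eq_of_ne (by simp) (by simp) hab]

lemma eq_of_mem (hS : IsLine S) (hT : IsLine T) {u v : Pt} (huv : u ≠ v)
    (huS : u ∈ S) (hvS : v ∈ S) (huT : u ∈ T) (hvT : v ∈ T) : S = T :=
  (hS.eq_lineThrough huv huS hvS).trans (hT.eq_lineThrough huv huT hvT).symm

lemma infinite (hS : IsLine S) : S.Infinite := by
  obtain ⟨u, v, huv, rfl⟩ := hS
  rw [lineThrough_eq_affineSpan huv]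
  exact Set.infinite_of_injective_forall_mem (AffineMap.lineMap_injective ℝ huv)
    (AffineMap.lineMap_mem_affineSpan_pair · u v)

lemma exists_mem_forall_notMem {ι : Type*} [Finite ι] {m : ι → Set Pt} (hS : IsLine S)
    (hm : ∀ k, IsLine (m k)) (hmS : ∀ k, m k ≠ S) (w : ι → Pt) (hwS : ∀ k, w k ∈ S)
    (hwm : ∀ k, w k ∈ m k) : ∃ z ∈ S, ∀ k, z ∉ m k := by
  obtain ⟨z, hzS, hzw⟩ := (hS.infinite.sdiff (Set.finite_range w)).nonempty
  refine ⟨z, hzS, fun k hzm => hmS k ?_⟩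
  have hne : z ≠ w k := fun h => hzw ⟨k, h.symm⟩
  exact (hm k).eq_of_mem hS hne hzm (hwm k) hzS (hwS k)

end IsLine

lemma exists_totalDegree_le_eval_eq_zero_iff {ι : Type*} [Fintype ι] {S : ι → Set Pt}
    (hS : ∀ i, IsLine (S i)) :
    ∃ P : MvPolynomial (Fin 2) ℝ, P.totalDegree ≤ Fintype.card ι ∧
      ∀ z, eval z P = 0 ↔ z ∈ ⋃ i, S i := by
  choose u v huv hSuv using hS
  refine ⟨∏ i, lineEq (u i) (v i), ?_, fun z => ?_⟩
  · refine (totalDegree_finsetProd _ _).trans ?_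
    simpa using Finset.sum_le_card_nsmul Finset.univ _ 1 fun i _ => totalDegree_lineEq_le (u i) (v i)
  · simp [Finset.prod_eq_zero_iff, eval_lineEq_eq_zero_iff (huv _), hSuv]

lemma LinearMap.ker_eq_span_pair_of_surjective {K V W : Type*} [Field K] [AddCommGroup V]
    [Module K V] [FiniteDimensional K V] [AddCommGroup W] [Module K W]
    {E : V →ₗ[K] W} (hE : Function.Surjective E)
    (hdim : Module.finrank K V ≤ Module.finrank K W + 2) {u v : V}
    (huv : LinearIndependent K ![u, v]) (hu : E u = 0) (hv : E v = 0) :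
    LinearMap.ker E = Submodule.span K {u, v} := by
  have hker : Module.finrank K (LinearMap.ker E) ≤ 2 := by
    have := E.finrank_range_add_finrank_ker
    rw [LinearMap.range_eq_top.mpr hE, finrank_top] at this
    omega
  symm
  refine Submodule.eq_of_le_of_finrank_le ?_ ?_
  · rw [Submodule.span_le, Set.pair_subset_iff]
    exact ⟨hu, hv⟩
  · have := finrank_span_eq_card huv
    rw [Matrix.range_cons_cons_empty, Fintype.card_fin] at this
    omega

lemma finrank_restrictTotalDegree_fin_two_three_le (K : Type*) [Field K] :
    Module.finrank K (restrictTotalDegree (Fin 2) K 3) ≤ 10 := by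
  rw [restrictTotalDegree, Module.finrank_eq_nat_card_basis (basisRestrictSupport K _)]
  let T : Finset (ℕ × ℕ) := (Finset.range 4 ×ˢ Finset.range 4).filter fun e => e.1 + e.2 ≤ 3
  have hT : ∀ s : Fin 2 →₀ ℕ, (s.sum fun _ e => e) ≤ 3 → (s 0, s 1) ∈ T := fun s hs => by
    rw [Finsupp.sum_fintype _ _ (fun _ => rfl), Fin.sum_univ_two] at hs
    simp only [T, Finset.mem_filter, Finset.mem_product, Finset.mem_range]
    omega
  calc Nat.card {s : Fin 2 →₀ ℕ | (s.sum fun _ e => e) ≤ 3}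
      ≤ Nat.card T := Nat.card_le_card_of_injective (fun s => ⟨(s.1 0, s.1 1), hT s.1 s.2⟩)
        fun s t hst => by
          simp only [Subtype.mk.injEq, Prod.mk.injEq] at hst
          ext i; fin_cases i
          exacts [hst.1, hst.2]
    _ = 10 := by simp only [Nat.card_eq_fintype_card, Fintype.card_coe]; decide

noncomputable def evalCubics {ι : Type*} (q : ι → Pt) :
    restrictTotalDegree (Fin 2) ℝ 3 →ₗ[ℝ] ι → ℝ :=
  (LinearMap.pi fun c => (aeval (q c)).toLinearMap).domRestrict _

@[simp] lemma evalCubics_apply {ι : Type*} (q : ι → Pt) (g : restrictTotalDegree (Fin 2) ℝ 3)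
    (c : ι) : evalCubics q g c = eval (q c) g := by
  simp [evalCubics]

structure IsChaslesGrid (ℓ m : Fin 3 → Set Pt) (q : Fin 3 × Fin 3 → Pt) : Prop where
  isLine_row : ∀ j, IsLine (ℓ j)
  isLine_col : ∀ k, IsLine (m k)
  injective : Function.Injective q
  mem_row : ∀ c, q c ∈ ℓ c.1
  mem_col : ∀ c, q c ∈ m c.2
  row_ne_col : ∀ j k, ℓ j ≠ m k

-- For distinct `j j₀ : Fin 3`, `-(j + j₀)` is the third index, as `0 + 1 + 2 = 0` in `Fin 3`.
lemma fin_three_ne_neg_add {j j₀ : Fin 3} (h : j ≠ j₀) : j ≠ -(j + j₀) := by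
  revert j j₀; decide

namespace IsChaslesGrid

variable {ℓ m : Fin 3 → Set Pt} {q : Fin 3 × Fin 3 → Pt}

lemma swap (h : IsChaslesGrid ℓ m q) : IsChaslesGrid m ℓ (q ∘ Prod.swap) where
  isLine_row := h.isLine_col
  isLine_col := h.isLine_row
  injective := h.injective.comp Prod.swap_injective
  mem_row c := h.mem_col c.swap
  mem_col c := h.mem_row c.swap
  row_ne_col j k := (h.row_ne_col k j).symm

lemma mem_row_iff (h : IsChaslesGrid ℓ m q) {c : Fin 3 × Fin 3} {j : Fin 3} :
    q c ∈ ℓ j ↔ c.1 = j := by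
  refine ⟨fun hc => ?_, fun hj => hj ▸ h.mem_row c⟩
  by_contra hj
  have hne : q c ≠ q (j, c.2) := h.injective.ne fun e => hj (congrArg Prod.fst e)
  exact h.row_ne_col j c.2 <| (h.isLine_row j).eq_of_mem (h.isLine_col c.2) hne hc
    (h.mem_row (j, c.2)) (h.mem_col c) (h.mem_col (j, c.2))

lemma mem_col_iff (h : IsChaslesGrid ℓ m q) {c : Fin 3 × Fin 3} {k : Fin 3} :
    q c ∈ m k ↔ c.2 = k :=
  h.swap.mem_row_iff (c := c.swap)

lemma exists_mem_row_forall_notMem_col (h : IsChaslesGrid ℓ m q) (j : Fin 3) :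
    ∃ z ∈ ℓ j, ∀ k, z ∉ m k :=
  (h.isLine_row j).exists_mem_forall_notMem h.isLine_col (fun k => (h.row_ne_col j k).symm)
    (fun k => q (j, k)) (fun k => h.mem_row (j, k)) (fun k => h.mem_col (j, k))

lemma exists_three_lines_of_fst_eq (h : IsChaslesGrid ℓ m q) {a P : Fin 3 × Fin 3} (hPa : P ≠ a)
    (h₁ : P.1 = a.1) :
    ∃ S : Fin 3 → Set Pt, (∀ i, IsLine (S i)) ∧ q P ∉ ⋃ i, S i ∧
      ∀ c, c ≠ a → c ≠ P → q c ∈ ⋃ i, S i := by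
  refine ⟨![ℓ (P.1 + 1), ℓ (P.1 + 2), m (-(P.2 + a.2))], ?_, ?_, ?_⟩
  · intro i; fin_cases i
    exacts [h.isLine_row _, h.isLine_row _, h.isLine_col _]
  all_goals simp only [Set.mem_iUnion, Fin.exists_fin_succ, Fin.exists_fin_zero,
    Matrix.cons_val_zero, Matrix.cons_val_succ, h.mem_row_iff, h.mem_col_iff, or_false]
  · have : ∀ j : Fin 3, j ≠ j + 1 ∧ j ≠ j + 2 := by decide
    simp only [not_or]
    exact ⟨(this P.1).1, (this P.1).2, fin_three_ne_neg_add fun h₂ => hPa (Prod.ext h₁ h₂)⟩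
  · rintro ⟨j, k⟩ hca hcP
    have : ∀ j' k' j k k₀ : Fin 3, (j', k') ≠ (j, k₀) → (j', k') ≠ (j, k) → k ≠ k₀ →
        j' = j + 1 ∨ j' = j + 2 ∨ k' = -(k + k₀) := by decide
    exact this _ _ _ _ _ (h₁ ▸ hca) hcP fun h₂ => hPa (Prod.ext h₁ h₂)

lemma exists_three_lines_of_ne (h : IsChaslesGrid ℓ m q) {a P : Fin 3 × Fin 3} (h₁ : P.1 ≠ a.1)
    (h₂ : P.2 ≠ a.2) :
    ∃ S : Fin 3 → Set Pt, (∀ i, IsLine (S i)) ∧ q P ∉ ⋃ i, S i ∧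
      ∀ c, c ≠ a → c ≠ P → q c ∈ ⋃ i, S i := by
  set D := lineThrough (q (a.1, P.2)) (q (P.1, a.2))
  have hne : q (a.1, P.2) ≠ q (P.1, a.2) := h.injective.ne fun e => h₁ (congrArg Prod.fst e).symm
  -- Through `q P` the line `D` would be the column of `P`, which misses `q (P.1, a.2)`.
  have hPD : q P ∉ D := fun hP => by
    have hne' : q (a.1, P.2) ≠ q P := h.injective.ne fun e => h₁ (congrArg Prod.fst e).symm
    have hDm : D = m P.2 := (isLine_lineThrough hne).eq_of_mem (h.isLine_col P.2) hne'
      (left_mem_lineThrough _ _) hP (h.mem_col (a.1, P.2)) (h.mem_col P)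
    have hm : q (P.1, a.2) ∈ m P.2 := hDm ▸ right_mem_lineThrough _ _
    exact h₂ (h.mem_col_iff.mp hm).symm
  refine ⟨![ℓ (-(P.1 + a.1)), m (-(P.2 + a.2)), D], ?_, ?_, ?_⟩
  · intro i; fin_cases i
    exacts [h.isLine_row _, h.isLine_col _, isLine_lineThrough hne]
  all_goals simp only [Set.mem_iUnion, Fin.exists_fin_succ, Fin.exists_fin_zero,
    Matrix.cons_val_zero, Matrix.cons_val_succ, h.mem_row_iff, h.mem_col_iff]
  · simp only [hPD, or_false, not_or]
    exact ⟨fin_three_ne_neg_add h₁, fin_three_ne_neg_add h₂⟩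
  · rintro ⟨j, k⟩ hca hcP
    have : ∀ j k j₀ k₀ j' k' : Fin 3, (j', k') ≠ (j₀, k₀) → (j', k') ≠ (j, k) → j ≠ j₀ → k ≠ k₀ →
        j' = -(j + j₀) ∨ k' = -(k + k₀) ∨ (j', k') = (j₀, k) ∨ (j', k') = (j, k₀) := by decide
    rcases this _ _ _ _ _ _ hca hcP h₁ h₂ with hj | hk | hc | hc
    · exact Or.inl hj
    · exact Or.inr (Or.inl hk)
    · exact Or.inr (Or.inr (Or.inl (hc ▸ left_mem_lineThrough _ _)))
    · exact Or.inr (Or.inr (Or.inl (hc ▸ right_mem_lineThrough _ _)))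

lemma exists_three_lines (h : IsChaslesGrid ℓ m q) {a P : Fin 3 × Fin 3} (hPa : P ≠ a) :
    ∃ S : Fin 3 → Set Pt, (∀ i, IsLine (S i)) ∧ q P ∉ ⋃ i, S i ∧
      ∀ c, c ≠ a → c ≠ P → q c ∈ ⋃ i, S i := by
  by_cases h₁ : P.1 = a.1
  · exact h.exists_three_lines_of_fst_eq hPa h₁
  by_cases h₂ : P.2 = a.2
  · obtain ⟨S, hS, hPS, hcS⟩ :=
      h.swap.exists_three_lines_of_fst_eq (a := a.swap) (P := P.swap) (by simpa using hPa) h₂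
    exact ⟨S, hS, hPS, fun c hca hcP => hcS c.swap (by simpa using hca) (by simpa using hcP)⟩
  · exact h.exists_three_lines_of_ne h₁ h₂

lemma exists_cubic_separating (h : IsChaslesGrid ℓ m q) {a P : Fin 3 × Fin 3} (hPa : P ≠ a) :
    ∃ C : MvPolynomial (Fin 2) ℝ, C.totalDegree ≤ 3 ∧ eval (q P) C ≠ 0 ∧
      ∀ c, c ≠ a → c ≠ P → eval (q c) C = 0 := by
  obtain ⟨S, hS, hPS, hcS⟩ := h.exists_three_lines hPa
  obtain ⟨C, hCdeg, hC⟩ := exists_totalDegree_le_eval_eq_zero_iff hS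
  exact ⟨C, by simpa using hCdeg, (hC _).not.mpr hPS, fun c hca hcP => (hC _).mpr (hcS c hca hcP)⟩

lemma surjective_evalCubics (h : IsChaslesGrid ℓ m q) (a : Fin 3 × Fin 3) :
    Function.Surjective (evalCubics fun c : {c // c ≠ a} => q c) := by
  rw [← LinearMap.range_eq_top, eq_top_iff, ← (Pi.basisFun ℝ _).span_eq, Submodule.span_le]
  rintro _ ⟨P, rfl⟩
  obtain ⟨C, hCdeg, hCP, hC⟩ := h.exists_cubic_separating P.2
  refine ⟨(eval (q P) C)⁻¹ • ⟨C, (mem_restrictTotalDegree _ _ _).mpr hCdeg⟩, funext fun c => ?_⟩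
  rw [map_smul, Pi.smul_apply, evalCubics_apply, Pi.basisFun_apply]
  by_cases hcP : c = P
  · subst hcP; simp [hCP]
  · simp [hC c c.2 (fun e => hcP (Subtype.ext e)), hcP]

lemma linearIndependent_row_col_cubics (h : IsChaslesGrid ℓ m q) {L M : MvPolynomial (Fin 2) ℝ}
    (hL : ∀ z, eval z L = 0 ↔ z ∈ ⋃ j, ℓ j) (hM : ∀ z, eval z M = 0 ↔ z ∈ ⋃ k, m k) :
    LinearIndependent ℝ ![L, M] := by
  obtain ⟨z, hzℓ, hzm⟩ := h.exists_mem_row_forall_notMem_col 0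
  obtain ⟨w, hwm, hwℓ⟩ := h.swap.exists_mem_row_forall_notMem_col 0
  rw [LinearIndependent.pair_iff]
  intro s t hst
  have hz := congrArg (eval z) hst
  have hw := congrArg (eval w) hst
  simp only [map_add, smul_eval, map_zero] at hz hw
  rw [(hL z).mpr (Set.mem_iUnion_of_mem 0 hzℓ), mul_zero, zero_add] at hz
  rw [(hM w).mpr (Set.mem_iUnion_of_mem 0 hwm), mul_zero, add_zero] at hw
  exact ⟨(mul_eq_zero.mp hw).resolve_right (by simpa [hL] using hwℓ),
    (mul_eq_zero.mp hz).resolve_right (by simpa [hM] using hzm)⟩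

theorem eval_eq_zero (h : IsChaslesGrid ℓ m q) {f : MvPolynomial (Fin 2) ℝ}
    (hf : f.totalDegree ≤ 3) {a : Fin 3 × Fin 3} (h8 : ∀ c, c ≠ a → eval (q c) f = 0) :
    eval (q a) f = 0 := by
  let V := restrictTotalDegree (Fin 2) ℝ 3
  have hV : ∀ {g : MvPolynomial (Fin 2) ℝ}, g.totalDegree ≤ 3 → g ∈ V :=
    (mem_restrictTotalDegree _ _ _).mpr
  obtain ⟨L, hLdeg, hL⟩ := exists_totalDegree_le_eval_eq_zero_iff h.isLine_row
  obtain ⟨M, hMdeg, hM⟩ := exists_totalDegree_le_eval_eq_zero_iff h.isLine_col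
  let L' : V := ⟨L, hV (by simpa using hLdeg)⟩
  let M' : V := ⟨M, hV (by simpa using hMdeg)⟩
  have hLM : LinearIndependent ℝ ![L', M'] := by
    have hcomp : V.subtype ∘ ![L', M'] = ![L, M] := by ext i : 1; fin_cases i <;> rfl
    exact .of_comp V.subtype (hcomp ▸ h.linearIndependent_row_col_cubics hL hM)
  have hdim : Module.finrank ℝ V ≤ Module.finrank ℝ ({c // c ≠ a} → ℝ) + 2 := by
    rw [Module.finrank_fintype_fun_eq_card, Fintype.card_subtype_compl]
    simpa using finrank_restrictTotalDegree_fin_two_three_le ℝ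
  have hker := LinearMap.ker_eq_span_pair_of_surjective (h.surjective_evalCubics a) hdim hLM
    (funext fun c => by simpa [L', hL] using ⟨c.1.1, h.mem_row c.1⟩)
    (funext fun c => by simpa [M', hM] using ⟨c.1.2, h.mem_col c.1⟩)
  have hfker : (⟨f, hV hf⟩ : V) ∈ LinearMap.ker (evalCubics fun c : {c // c ≠ a} => q c) :=
    LinearMap.mem_ker.mpr (funext fun c => (evalCubics_apply _ _ _).trans (h8 c.1 c.2))
  obtain ⟨s, t, hst⟩ := Submodule.mem_span_pair.mp (hker ▸ hfker)
  have hfa := congrArg (fun g : V => eval (q a) g.1) hst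
  simp only [L', M', Submodule.coe_add, Submodule.coe_smul, map_add, smul_eval] at hfa
  rw [← hfa, (hL _).mpr (Set.mem_iUnion_of_mem _ (h.mem_row a)),
    (hM _).mpr (Set.mem_iUnion_of_mem _ (h.mem_col a))]
  ring

end IsChaslesGrid

/-- With `ℓ₁ = p₁p₂, ℓ₂ = p₃p₄, ℓ₃ = p₀p₅` and `m₁ = p₂p₅, m₂ = p₀p₃, m₃ = p₁p₄`, the point
`ℓ_{j+1} ∩ m_{k+1}` is `p (chaslesIndex (j, k))`. -/
def chaslesIndex (c : Fin 3 × Fin 3) : Fin 9 := ![![2, 6, 1], ![8, 3, 4], ![5, 0, 7]] c.1 c.2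

lemma chaslesIndex_bijective : Function.Bijective chaslesIndex := by decide

lemma isChaslesGrid_of_incidences {p : Fin 9 → Pt} (hp : Function.Injective p)
    (h6 : p 6 ∈ lineThrough (p 1) (p 2)) (h8 : p 8 ∈ lineThrough (p 3) (p 4))
    (h7 : p 7 ∈ lineThrough (p 0) (p 5)) (h8' : p 8 ∈ lineThrough (p 2) (p 5))
    (h6' : p 6 ∈ lineThrough (p 0) (p 3)) (h7' : p 7 ∈ lineThrough (p 1) (p 4))
    (hlines : Function.Injective ![lineThrough (p 1) (p 2), lineThrough (p 3) (p 4),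
      lineThrough (p 0) (p 5), lineThrough (p 2) (p 5), lineThrough (p 0) (p 3),
      lineThrough (p 1) (p 4)]) :
    IsChaslesGrid ![lineThrough (p 1) (p 2), lineThrough (p 3) (p 4), lineThrough (p 0) (p 5)]
      ![lineThrough (p 2) (p 5), lineThrough (p 0) (p 3), lineThrough (p 1) (p 4)]
      (p ∘ chaslesIndex) where
  isLine_row j := by fin_cases j <;> exact isLine_lineThrough (hp.ne (by decide))
  isLine_col k := by fin_cases k <;> exact isLine_lineThrough (hp.ne (by decide))
  injective := hp.comp chaslesIndex_bijective.injective
  mem_row := by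
    rintro ⟨j, k⟩; fin_cases j <;> fin_cases k <;> simp [chaslesIndex, h6, h8, h7]
  mem_col := by
    rintro ⟨j, k⟩; fin_cases j <;> fin_cases k <;> simp [chaslesIndex, h8', h6', h7']
  row_ne_col j k e := by
    have := @hlines (Fin.castAdd 3 j) (Fin.natAdd 3 k)
    fin_cases j <;> fin_cases k <;> exact absurd (this e) (by decide)

theorem stmt9_general (n : ℕ) (x r : ZMod n → Pt)
    (hcol : ∀ a b c : ZMod n, a ≠ b → a + b + c = 0 →
      Collinear ℝ ({x a, x b, r c} : Set Pt))
    (i : ZMod n)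
    (p : Fin 9 → Pt)
    (hp : p = ![x (-1 - i), x (-2 - i), x (-3 - i), x (-4 - i), x (-5 - i), x (-6 - i),
      r (5 + 2 * i), r (7 + 2 * i), r (9 + 2 * i)])
    (hdist : Function.Injective p)
    (hlines : Function.Injective
      ![lineThrough (x (-2 - i)) (x (-3 - i)), lineThrough (x (-4 - i)) (x (-5 - i)),
        lineThrough (x (-1 - i)) (x (-6 - i)), lineThrough (x (-3 - i)) (x (-6 - i)),
        lineThrough (x (-1 - i)) (x (-4 - i)), lineThrough (x (-2 - i)) (x (-5 - i))])
    (f : MvPolynomial (Fin 2) ℝ) (hdeg : f.totalDegree ≤ 3)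
    (a : Fin 9) (h8 : ∀ b, b ≠ a → MvPolynomial.eval (p b) f = 0) :
    ∀ b, MvPolynomial.eval (p b) f = 0 := by
  have hmem : ∀ {s t k : Fin 9} {u v w : ZMod n}, s ≠ t → p s = x u → p t = x v → p k = r w →
      u + v + w = 0 → p k ∈ lineThrough (p s) (p t) := fun hst hs ht hk huvw => by
    rw [hs, ht, hk]
    exact hcol _ _ _ (fun e => hdist.ne hst (by rw [hs, ht, e])) huvw
  have hgrid := isChaslesGrid_of_incidences hdist ?_ ?_ ?_ ?_ ?_ ?_ (by rw [hp]; exact hlines)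
  · intro b
    obtain ⟨a, rfl⟩ := chaslesIndex_bijective.2 a
    have ha := hgrid.eval_eq_zero hdeg fun c hc => h8 _ (chaslesIndex_bijective.1.ne hc)
    rcases eq_or_ne b (chaslesIndex a) with rfl | hb
    exacts [ha, h8 b hb]
  all_goals exact hmem (by decide) (by rw [hp]; rfl) (by rw [hp]; rfl) (by rw [hp]; rfl) (by ring)

theorem stmt9 (n : ℕ) (x r : ZMod n → Pt)
    (hcol : ∀ a b c : ZMod n, a ≠ b → a + b + c = 0 →
      Collinear ℝ ({x a, x b, r c} : Set Pt))
    (i : ZMod n)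
    (p : Fin 9 → Pt)
    (hp : p = ![x (-1 - i), x (-2 - i), x (-3 - i), x (-4 - i), x (-5 - i), x (-6 - i),
      r (5 + 2 * i), r (7 + 2 * i), r (9 + 2 * i)])
    (hdist : Function.Injective p)
    (hlines : Function.Injective
      ![lineThrough (x (-2 - i)) (x (-3 - i)), lineThrough (x (-4 - i)) (x (-5 - i)),
        lineThrough (x (-1 - i)) (x (-6 - i)), lineThrough (x (-3 - i)) (x (-6 - i)),
        lineThrough (x (-1 - i)) (x (-4 - i)), lineThrough (x (-2 - i)) (x (-5 - i))])
    (f : MvPolynomial (Fin 2) ℝ) (hf : f ≠ 0) (hdeg : f.totalDegree ≤ 3)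
    (a : Fin 9) (h8 : ∀ b, b ≠ a → MvPolynomial.eval (p b) f = 0) :
    ∀ b, MvPolynomial.eval (p b) f = 0 :=
  stmt9_general n x r hcol i p hp hdist hlines f hdeg a h8
end

section
/- Let x_0, …, x_{n−1} and r_0, …, r_{n−1} be points in the plane such that x_i, x_j, r_k are collinear whenever i + j + k ≡ 0 (mod n) (with appropriate distinctness of the nine points and six lines involved). Then any cubic curve passing through eight of the nine points x_{n−1−i}, x_{n−2−i}, x_{n−3−i}, x_{n−5−i}, x_{n−6−i}, x_{n−7−i}, r_{7+2i}, r_{8+2i}, r_{9+2i} passes through all nine. -/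
/-!
A polynomial of degree at most `d` vanishing at `d + 1` points of a line vanishes on the line,
and is then divisible by the line's affine form, with degree dropping by one. Let `M` be the
product of the forms of the three column lines `m₁, m₂, m₃`; it vanishes at all nine points.
Choose `q` off the grid on a row line not through the missing point; then `M q ≠ 0`, so
`g = f - c M` vanishes at `q` for a suitable `c`, hence at four points of that row, and the row
divides `g`. The cofactor, of degree at most two, vanishes at the three points of a second row,
which divides it in turn; what is left has degree at most one and vanishes at the two known
points of the last row, hence at the missing point, where `M` vanishes too.
-/

open MvPolynomial

theorem left_mem_lineThrough_s10 (a b : Pt) : a ∈ lineThrough a b := by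
  simp [lineThrough, collinear_pair]

theorem right_mem_lineThrough_s10 (a b : Pt) : b ∈ lineThrough a b := by
  simp [lineThrough, collinear_pair]

theorem lineThrough_eq_affineSpan_s10 {a b : Pt} (hab : a ≠ b) : lineThrough a b = line[ℝ, a, b] := by
  ext z
  refine ⟨fun h => h.mem_affineSpan_of_mem_of_ne (by simp) (by simp) (by simp) hab, fun h => ?_⟩
  have := collinear_insert_of_mem_affineSpan_pair h
  rwa [Set.insert_comm, Set.pair_comm] at this

theorem mem_lineThrough_iff {a b z : Pt} (hab : a ≠ b) :
    z ∈ lineThrough a b ↔ ∃ t : ℝ, AffineMap.lineMap a b t = z := by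
  rw [lineThrough_eq_affineSpan_s10 hab, SetLike.mem_coe, mem_affineSpan_pair_iff_exists_lineMap_eq]

theorem lineThrough_eq_of_mem {a b c d p q : Pt} (hab : a ≠ b) (hcd : c ≠ d) (hpq : p ≠ q)
    (hpab : p ∈ lineThrough a b) (hqab : q ∈ lineThrough a b)
    (hpcd : p ∈ lineThrough c d) (hqcd : q ∈ lineThrough c d) :
    lineThrough a b = lineThrough c d := by
  have key : ∀ {a b : Pt}, a ≠ b → p ∈ lineThrough a b → q ∈ lineThrough a b →
      line[ℝ, a, b] = line[ℝ, p, q] := by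
    intro a b hab hp hq
    rw [lineThrough_eq_affineSpan_s10 hab] at hp hq
    have hcol := collinear_insert_insert_of_mem_affineSpan_pair hp hq
    rw [hcol.affineSpan_eq_of_ne (by simp) (by simp) hpq,
      hcol.affineSpan_eq_of_ne (by simp) (by simp) hab]
  rw [lineThrough_eq_affineSpan_s10 hab, lineThrough_eq_affineSpan_s10 hcd, key hab hpab hqab,
    key hcd hpcd hqcd]

theorem lineMap_apply_coord (a b : Pt) (t : ℝ) (i : Fin 2) :
    AffineMap.lineMap a b t i = a i + t * (b i - a i) := by
  simp [AffineMap.lineMap_apply_module]; ring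

theorem sq_sub_add_sq_sub_ne_zero {a b : Pt} (hab : a ≠ b) :
    (b 0 - a 0) ^ 2 + (b 1 - a 1) ^ 2 ≠ 0 := by
  intro h
  refine hab (funext fun i => ?_)
  fin_cases i <;> simp <;> nlinarith [sq_nonneg (b 0 - a 0), sq_nonneg (b 1 - a 1)]

noncomputable def lineForm (a b : Pt) : MvPolynomial (Fin 2) ℝ :=
  C (b 1 - a 1) * (X 0 - C (a 0)) - C (b 0 - a 0) * (X 1 - C (a 1))

theorem eval_lineForm (a b z : Pt) :
    eval z (lineForm a b) = (b 1 - a 1) * (z 0 - a 0) - (b 0 - a 0) * (z 1 - a 1) := by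
  simp [lineForm]

theorem eval_lineForm_eq_zero_iff {a b z : Pt} (hab : a ≠ b) :
    eval z (lineForm a b) = 0 ↔ z ∈ lineThrough a b := by
  rw [eval_lineForm, mem_lineThrough_iff hab]
  constructor
  · intro h
    have hn := sq_sub_add_sq_sub_ne_zero hab
    refine ⟨((b 0 - a 0) * (z 0 - a 0) + (b 1 - a 1) * (z 1 - a 1)) /
      ((b 0 - a 0) ^ 2 + (b 1 - a 1) ^ 2), funext fun i => ?_⟩
    rw [lineMap_apply_coord]
    fin_cases i <;> simp <;> field_simp
    · linear_combination (-(b 1 - a 1)) * h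
    · linear_combination (b 0 - a 0) * h
  · rintro ⟨t, rfl⟩
    simp only [lineMap_apply_coord]
    ring

theorem totalDegree_lineForm {a b : Pt} (hab : a ≠ b) : (lineForm a b).totalDegree = 1 := by
  refine le_antisymm ?_ (Nat.one_le_iff_ne_zero.2 fun h => ?_)
  · have h : ∀ i (c c' : ℝ), (C c' * (X i - C c) : MvPolynomial (Fin 2) ℝ).totalDegree ≤ 1 :=
      fun i c c' => (totalDegree_mul _ _).trans <| by
        simpa using (totalDegree_sub _ _).trans (max_le (totalDegree_X i).le (by simp))
    exact (totalDegree_sub _ _).trans (max_le (h _ _ _) (h _ _ _))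
  · have hc := totalDegree_eq_zero_iff_eq_C.1 h
    have h1 := congrArg (eval a) hc
    have h2 := congrArg (eval ![a 0 + (b 1 - a 1), a 1 - (b 0 - a 0)]) hc
    simp only [eval_lineForm, eval_C] at h1 h2
    simp at h2
    apply sq_sub_add_sq_sub_ne_zero hab
    linear_combination h2 - h1

open Polynomial in
theorem natDegree_aeval_le_totalDegree {σ R : Type*} [CommSemiring R] {g : σ → R[X]}
    (hg : ∀ i, (g i).natDegree ≤ 1) (f : MvPolynomial σ R) :
    (aeval g f).natDegree ≤ f.totalDegree := by
  rw [MvPolynomial.aeval_def, eval₂_eq]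
  refine natDegree_sum_le_of_forall_le _ _ fun m hm => ?_
  refine (natDegree_C_mul_le _ _).trans ((natDegree_prod_le _ _).trans ?_)
  refine (Finset.sum_le_sum fun i _ => ?_).trans (le_totalDegree hm)
  exact (natDegree_pow_le_of_le (m i) (hg i)).trans (mul_one _).le

theorem sub_aeval_mem {σ R : Type*} [CommRing R] {I : Ideal (MvPolynomial σ R)}
    {g : σ → MvPolynomial σ R} (hg : ∀ i, X i - g i ∈ I) (f : MvPolynomial σ R) :
    f - aeval g f ∈ I := by
  have : (Ideal.Quotient.mkₐ R I).comp (aeval g) = Ideal.Quotient.mkₐ R I :=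
    algHom_ext fun i => by simpa [Ideal.Quotient.eq] using I.neg_mem_iff.2 (hg i)
  rw [← Ideal.Quotient.eq]
  exact (DFunLike.congr_fun this f).symm

section LineRestrict

variable {σ R : Type*} [CommRing R]

noncomputable def lineRestrict (a b : σ → R) (f : MvPolynomial σ R) : Polynomial R :=
  aeval (fun i => Polynomial.C (b i - a i) * Polynomial.X + Polynomial.C (a i)) f

theorem eval_lineRestrict (a b : σ → R) (f : MvPolynomial σ R) (t : R) :
    (lineRestrict a b f).eval t = eval (AffineMap.lineMap a b t) f := by
  rw [lineRestrict, ← Polynomial.coe_aeval_eq_eval, ← AlgHom.comp_apply, comp_aeval,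
    ← aeval_eq_eval]
  congr 2
  funext i
  simp [AffineMap.lineMap_apply_module]
  ring

theorem natDegree_lineRestrict_le (a b : σ → R) (f : MvPolynomial σ R) :
    (lineRestrict a b f).natDegree ≤ f.totalDegree :=
  natDegree_aeval_le_totalDegree (fun _ => Polynomial.natDegree_linear_le) f

end LineRestrict

theorem lineForm_dvd_of_lineRestrict_eq_zero {a b : Pt} (hab : a ≠ b)
    {f : MvPolynomial (Fin 2) ℝ} (hf : lineRestrict a b f = 0) : lineForm a b ∣ f := by
  set u := ((b 0 - a 0) ^ 2 + (b 1 - a 1) ^ 2)⁻¹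
  have hu : C u * (C (b 0 - a 0) ^ 2 + C (b 1 - a 1) ^ 2) = (1 : MvPolynomial (Fin 2) ℝ) := by
    rw [← map_pow, ← map_pow, ← map_add, ← map_mul, inv_mul_cancel₀ (sq_sub_add_sq_sub_ne_zero hab),
      map_one]
  -- `T` is the line parameter of the orthogonal projection `π` onto the line: `f ∘ π = 0`, and
  -- each `X i - π i` is a multiple of `lineForm a b`.
  set T : MvPolynomial (Fin 2) ℝ :=
    C u * (C (b 0 - a 0) * (X 0 - C (a 0)) + C (b 1 - a 1) * (X 1 - C (a 1)))
  have hproj : aeval (fun i => C (b i - a i) * T + C (a i)) f = 0 := by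
    have h : Polynomial.aeval T (lineRestrict a b f) =
        aeval (fun i => C (b i - a i) * T + C (a i)) f := by
      rw [lineRestrict, ← AlgHom.comp_apply, comp_aeval]
      congr 2
      funext i
      simp [algebraMap_eq]
    rw [← h, hf, map_zero]
  rw [← Ideal.mem_span_singleton, ← sub_zero f, ← hproj]
  refine sub_aeval_mem (fun i => Ideal.mem_span_singleton.2 ?_) f
  fin_cases i
  · refine ⟨C u * C (b 1 - a 1), ?_⟩
    simp only [lineForm, T, Fin.zero_eta]
    linear_combination -(X 0 - C (a 0)) * hu
  · refine ⟨-(C u * C (b 0 - a 0)), ?_⟩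
    simp only [lineForm, T, Fin.mk_one]
    linear_combination -(X 1 - C (a 1)) * hu

theorem lineForm_ne_zero {a b : Pt} (hab : a ≠ b) : lineForm a b ≠ 0 := fun h => by
  simpa [h] using totalDegree_lineForm hab

theorem lineRestrict_eq_zero_of_eval_eq_zero {a b : Pt} (hab : a ≠ b) {ι : Type*} [Fintype ι]
    {v : ι → Pt} (hv : Function.Injective v) (hvL : ∀ i, v i ∈ lineThrough a b)
    {f : MvPolynomial (Fin 2) ℝ} (hf : ∀ i, eval (v i) f = 0)
    (hdeg : f.totalDegree < Fintype.card ι) : lineRestrict a b f = 0 := by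
  choose t ht using fun i => (mem_lineThrough_iff hab).1 (hvL i)
  refine Polynomial.eq_zero_of_natDegree_lt_card_of_eval_eq_zero _ (f := t) ?_ ?_ ?_
  · exact fun i j h => hv (by rw [← ht, ← ht, h])
  · exact fun i => by rw [eval_lineRestrict, ht, hf]
  · exact (natDegree_lineRestrict_le a b f).trans_lt hdeg

theorem eval_eq_zero_of_lineRestrict_eq_zero {a b z : Pt} (hab : a ≠ b)
    {f : MvPolynomial (Fin 2) ℝ} (hf : lineRestrict a b f = 0) (hz : z ∈ lineThrough a b) :
    eval z f = 0 := by
  obtain ⟨t, rfl⟩ := (mem_lineThrough_iff hab).1 hz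
  rw [← eval_lineRestrict, hf, Polynomial.eval_zero]

theorem exists_eq_lineForm_mul {a b : Pt} (hab : a ≠ b) {f : MvPolynomial (Fin 2) ℝ} {d : ℕ}
    (hdeg : f.totalDegree ≤ d + 1) (hf : lineRestrict a b f = 0) :
    ∃ g, f = lineForm a b * g ∧ g.totalDegree ≤ d := by
  obtain ⟨g, rfl⟩ := lineForm_dvd_of_lineRestrict_eq_zero hab hf
  refine ⟨g, rfl, ?_⟩
  rcases eq_or_ne g 0 with rfl | hg
  · simp
  rw [totalDegree_mul_of_isDomain (lineForm_ne_zero hab) hg, totalDegree_lineForm hab] at hdeg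
  omega

theorem eval_eq_zero_of_eval_lineForm_mul {a b z : Pt} (hab : a ≠ b) (hz : z ∉ lineThrough a b)
    {g : MvPolynomial (Fin 2) ℝ} (h : eval z (lineForm a b * g) = 0) : eval z g = 0 := by
  rw [map_mul] at h
  exact (mul_eq_zero.1 h).resolve_left (mt (eval_lineForm_eq_zero_iff hab).1 hz)

theorem lineThrough_infinite {a b : Pt} (hab : a ≠ b) : (lineThrough a b).Infinite := by
  have : lineThrough a b = Set.range (AffineMap.lineMap a b : ℝ → Pt) := by
    ext z; rw [mem_lineThrough_iff hab, Set.mem_range]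
  rw [this]
  exact Set.infinite_range_of_injective (AffineMap.lineMap_injective ℝ hab)

structure LineGrid where
  P : Fin 3 → Fin 3 → Pt
  rowA : Fin 3 → Pt
  rowB : Fin 3 → Pt
  colA : Fin 3 → Pt
  colB : Fin 3 → Pt
  injective : Function.Injective (Function.uncurry P)
  rowA_ne_rowB : ∀ j, rowA j ≠ rowB j
  colA_ne_colB : ∀ k, colA k ≠ colB k
  mem_row : ∀ j k, P j k ∈ lineThrough (rowA j) (rowB j)
  mem_col : ∀ j k, P j k ∈ lineThrough (colA k) (colB k)
  row_ne_col : ∀ j k, lineThrough (rowA j) (rowB j) ≠ lineThrough (colA k) (colB k)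

namespace LineGrid

variable (G : LineGrid)

theorem injective_P (j : Fin 3) : Function.Injective (G.P j) :=
  fun _ _ h => congrArg Prod.snd (G.injective (a₁ := (j, _)) (a₂ := (j, _)) h)

theorem not_mem_row {j j' : Fin 3} (h : j ≠ j') (k : Fin 3) :
    G.P j k ∉ lineThrough (G.rowA j') (G.rowB j') := fun hm =>
  G.row_ne_col j' k <| lineThrough_eq_of_mem (G.rowA_ne_rowB j') (G.colA_ne_colB k)
    (fun e => h (congrArg Prod.fst (G.injective (a₁ := (j, k)) (a₂ := (j', k)) e)))
    hm (G.mem_row j' k) (G.mem_col j k) (G.mem_col j' k)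

theorem eval_eq_zero_of_eval_rowForm_mul {j j' : Fin 3} (h : j ≠ j') (k : Fin 3)
    {g : MvPolynomial (Fin 2) ℝ} (hg : eval (G.P j k) (lineForm (G.rowA j') (G.rowB j') * g) = 0) :
    eval (G.P j k) g = 0 :=
  eval_eq_zero_of_eval_lineForm_mul (G.rowA_ne_rowB j') (G.not_mem_row h k) hg

noncomputable def colProduct : MvPolynomial (Fin 2) ℝ := ∏ k, lineForm (G.colA k) (G.colB k)

theorem totalDegree_colProduct_le : G.colProduct.totalDegree ≤ 3 :=
  (totalDegree_finsetProd _ _).trans <| by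
    simp [totalDegree_lineForm (G.colA_ne_colB _)]

theorem eval_colProduct (j k : Fin 3) : eval (G.P j k) G.colProduct = 0 := by
  rw [colProduct, map_prod]
  exact Finset.prod_eq_zero (Finset.mem_univ k) ((eval_lineForm_eq_zero_iff (G.colA_ne_colB k)).2
    (G.mem_col j k))

theorem exists_mem_row_eval_colProduct_ne_zero (j : Fin 3) :
    ∃ q ∈ lineThrough (G.rowA j) (G.rowB j), q ∉ Set.range (G.P j) ∧ eval q G.colProduct ≠ 0 := by
  obtain ⟨q, hqL, hqP⟩ :=
    (lineThrough_infinite (G.rowA_ne_rowB j)).exists_notMem_finite (Set.finite_range (G.P j))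
  refine ⟨q, hqL, hqP, ?_⟩
  rw [colProduct, map_prod, Finset.prod_ne_zero_iff]
  -- a column through `q` would share `q` and `P j k` with row `j`
  refine fun k _ hq => G.row_ne_col j k <| lineThrough_eq_of_mem (G.rowA_ne_rowB j)
    (G.colA_ne_colB k) (fun e => hqP ⟨k, e.symm⟩) hqL (G.mem_row j k)
    ((eval_lineForm_eq_zero_iff (G.colA_ne_colB k)).1 hq) (G.mem_col j k)

theorem eval_eq_zero_of_forall_ne {f : MvPolynomial (Fin 2) ℝ} (hdeg : f.totalDegree ≤ 3)
    {j₀ k₀ : Fin 3} (hf : ∀ j k, (j, k) ≠ (j₀, k₀) → eval (G.P j k) f = 0) :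
    eval (G.P j₀ k₀) f = 0 := by
  obtain ⟨j₁, j₂, h₁₀, h₂₀, h₁₂⟩ : ∃ j₁ j₂ : Fin 3, j₁ ≠ j₀ ∧ j₂ ≠ j₀ ∧ j₁ ≠ j₂ :=
    (by decide : ∀ j₀ : Fin 3, ∃ j₁ j₂ : Fin 3, j₁ ≠ j₀ ∧ j₂ ≠ j₀ ∧ j₁ ≠ j₂) j₀
  obtain ⟨q, hqL, hqP, hqM⟩ := G.exists_mem_row_eval_colProduct_ne_zero j₁
  set c := eval q f / eval q G.colProduct
  set g := f - C c * G.colProduct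
  have hgdeg : g.totalDegree ≤ 3 := (totalDegree_sub _ _).trans <| max_le hdeg <|
    (totalDegree_mul _ _).trans (by simpa using G.totalDegree_colProduct_le)
  have hgq : eval q g = 0 := by simp [g, c, hqM]
  have hgP : ∀ j k, (j, k) ≠ (j₀, k₀) → eval (G.P j k) g = 0 := fun j k h => by
    simp [g, hf j k h, eval_colProduct]
  obtain ⟨g₁, hg₁, hg₁deg⟩ := exists_eq_lineForm_mul (d := 2) (G.rowA_ne_rowB j₁) hgdeg <|
    lineRestrict_eq_zero_of_eval_eq_zero (G.rowA_ne_rowB j₁) (v := Fin.cons q (G.P j₁))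
      (Fin.cons_injective_iff.2 ⟨hqP, G.injective_P j₁⟩) (Fin.cases hqL (G.mem_row j₁))
      (Fin.cases hgq fun k => hgP _ _ (by simp [h₁₀])) (by simp; omega)
  rw [hg₁] at hgP
  obtain ⟨g₂, rfl, hg₂deg⟩ := exists_eq_lineForm_mul (d := 1) (G.rowA_ne_rowB j₂) hg₁deg <|
    lineRestrict_eq_zero_of_eval_eq_zero (G.rowA_ne_rowB j₂) (G.injective_P j₂) (G.mem_row j₂)
      (fun k => G.eval_eq_zero_of_eval_rowForm_mul h₁₂.symm k (hgP _ _ (by simp [h₂₀])))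
      (by simp; omega)
  have hg₂ : lineRestrict (G.rowA j₀) (G.rowB j₀) g₂ = 0 :=
    lineRestrict_eq_zero_of_eval_eq_zero (G.rowA_ne_rowB j₀)
      (v := fun k : {k // k ≠ k₀} => G.P j₀ k)
      ((G.injective_P j₀).comp Subtype.val_injective) (fun k => G.mem_row j₀ k)
      (fun k => G.eval_eq_zero_of_eval_rowForm_mul h₂₀.symm _ <|
        G.eval_eq_zero_of_eval_rowForm_mul h₁₀.symm _ <| hgP _ _ (by simp [k.2]))
      (by simp; omega)
  have hf_eq : f = C c * G.colProduct + g := by simp [g]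
  rw [hf_eq, hg₁, map_add, map_mul, G.eval_colProduct, map_mul, map_mul,
    eval_eq_zero_of_lineRestrict_eq_zero (G.rowA_ne_rowB j₀) hg₂ (G.mem_row j₀ k₀)]
  simp

end LineGrid

-- Row `j` is the line `ℓⱼ₊₁`, column `k` the line `mₖ₊₁`; the entry is the index in `p` of
-- their common point.
def gridIndex : Fin 3 → Fin 3 → Fin 9 := ![![4, 6, 0], ![8, 1, 5], ![2, 3, 7]]

theorem stmt10_general (n : ℕ) (x r : ZMod n → Pt)
    (hcol : ∀ a b c : ZMod n, a ≠ b → a + b + c = 0 →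
      Collinear ℝ ({x a, x b, r c} : Set Pt))
    (i : ZMod n)
    (p : Fin 9 → Pt)
    (hp : p = ![x (-1 - i), x (-2 - i), x (-3 - i), x (-5 - i), x (-6 - i), x (-7 - i),
      r (7 + 2 * i), r (8 + 2 * i), r (9 + 2 * i)])
    (hdist : Function.Injective p)
    (hlines : Function.Injective
      ![lineThrough (x (-1 - i)) (x (-6 - i)), lineThrough (x (-2 - i)) (x (-7 - i)),
        lineThrough (x (-3 - i)) (x (-5 - i)), lineThrough (x (-3 - i)) (x (-6 - i)),
        lineThrough (x (-2 - i)) (x (-5 - i)), lineThrough (x (-1 - i)) (x (-7 - i))])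
    (f : MvPolynomial (Fin 2) ℝ) (hdeg : f.totalDegree ≤ 3)
    (a : Fin 9) (h8 : ∀ b, b ≠ a → MvPolynomial.eval (p b) f = 0) :
    ∀ b, MvPolynomial.eval (p b) f = 0 := by
  -- The lines `ℓ₁, ℓ₂, ℓ₃, m₁, m₂, m₃` (numbered `l`) pass through `p (aI l)`, `p (bI l)` and
  -- `p (cI l)`, and `hlines` lists them as the lines through the first two.
  set aI : Fin 6 → Fin 9 := ![0, 1, 2, 2, 1, 0]
  set bI : Fin 6 → Fin 9 := ![4, 5, 3, 4, 3, 5]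
  set cI : Fin 6 → Fin 9 := ![6, 8, 7, 8, 6, 7]
  have hmem : ∀ l u, u = aI l ∨ u = bI l ∨ u = cI l → p u ∈ lineThrough (p (aI l)) (p (bI l)) := by
    rintro l u (rfl | rfl | rfl)
    · exact left_mem_lineThrough_s10 _ _
    · exact right_mem_lineThrough_s10 _ _
    · have hne : p (aI l) ≠ p (bI l) := hdist.ne (by fin_cases l <;> decide)
      subst hp
      fin_cases l <;> exact hcol _ _ _ (fun e => hne (congrArg x e)) (by ring)
  have hL : Function.Injective fun l => lineThrough (p (aI l)) (p (bI l)) := by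
    subst hp; convert hlines using 1; funext l; fin_cases l <;> rfl
  have hI : Function.Injective (Function.uncurry gridIndex) := by decide
  let G : LineGrid :=
    { P := fun j k => p (gridIndex j k)
      rowA := fun j => p (aI (Fin.castAdd 3 j))
      rowB := fun j => p (bI (Fin.castAdd 3 j))
      colA := fun k => p (aI (Fin.natAdd 3 k))
      colB := fun k => p (bI (Fin.natAdd 3 k))
      injective := hdist.comp hI
      rowA_ne_rowB := fun j => hdist.ne (by revert j; decide)
      colA_ne_colB := fun k => hdist.ne (by revert k; decide)
      mem_row := fun j k => hmem _ _ (by revert j k; decide)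
      mem_col := fun j k => hmem _ _ (by revert j k; decide)
      row_ne_col := fun j k => hL.ne (by simp [Fin.ext_iff]; omega) }
  obtain ⟨j₀, k₀, rfl⟩ := (by decide : ∀ a : Fin 9, ∃ j k, gridIndex j k = a) a
  intro b
  rcases eq_or_ne b (gridIndex j₀ k₀) with rfl | hb
  · exact G.eval_eq_zero_of_forall_ne hdeg fun j k h => h8 _ fun e => h (hI e)
  · exact h8 b hb

theorem stmt10 (n : ℕ) (x r : ZMod n → Pt)
    (hcol : ∀ a b c : ZMod n, a ≠ b → a + b + c = 0 →
      Collinear ℝ ({x a, x b, r c} : Set Pt))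
    (i : ZMod n)
    (p : Fin 9 → Pt)
    (hp : p = ![x (-1 - i), x (-2 - i), x (-3 - i), x (-5 - i), x (-6 - i), x (-7 - i),
      r (7 + 2 * i), r (8 + 2 * i), r (9 + 2 * i)])
    (hdist : Function.Injective p)
    (hlines : Function.Injective
      ![lineThrough (x (-1 - i)) (x (-6 - i)), lineThrough (x (-2 - i)) (x (-7 - i)),
        lineThrough (x (-3 - i)) (x (-5 - i)), lineThrough (x (-3 - i)) (x (-6 - i)),
        lineThrough (x (-2 - i)) (x (-5 - i)), lineThrough (x (-1 - i)) (x (-7 - i))])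
    (f : MvPolynomial (Fin 2) ℝ) (hf : f ≠ 0) (hdeg : f.totalDegree ≤ 3)
    (a : Fin 9) (h8 : ∀ b, b ≠ a → MvPolynomial.eval (p b) f = 0) :
    ∀ b, MvPolynomial.eval (p b) f = 0 :=
  stmt10_general n x r hcol i p hp hdist hlines f hdeg a h8
end

section
/- Let P be a set of n ≥ 4 points in general position in the plane determining exactly n distinct directions. Then P is contained in a conic (the zero set of a nonzero polynomial of degree at most 2). -/
/-!
Shear the plane so that no chord of `P` is vertical: directions become finite slopes, and the `n`
directions become `n` slopes. By general position the other `n - 1` points are seen from `a ∈ P`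
along distinct slopes, so exactly one slope `τ a` is missed at `a`; it plays the role of the tangent
at `a`. For a chord `xy` of slope `m`, the product of `s - m` over the remaining slopes can be read
off from the pencil of chords at `x` and from the one at `y`. Multiplying these readings around a
triangle and comparing them by a Ceva-type identity for slopes gives Segre's lemma
`(τx - m_xy)(τy - m_yz)(τz - m_zx) = -(τx - m_xz)(τy - m_yx)(τz - m_zy)`.
Applied to the triangles `abc`, `abp` and `acp`, it puts every `p ∈ P` on the conic through `c`
tangent at `a` and `b` to the lines of slopes `τ a` and `τ b`.
-/

open Finset MvPolynomial

def shearCoord (k : ℝ) : Pt →ₗ[ℝ] ℝ := LinearMap.proj 0 + k • LinearMap.proj 1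

@[simp]
lemma shearCoord_apply (k : ℝ) (v : Pt) : shearCoord k v = v 0 + k * v 1 := rfl

-- The slope of `v` in the coordinates `(shearCoord k v, v 1)`. It is `0` when `shearCoord k v = 0`;
-- `k` is always chosen so that this does not happen for chords of `P`.
noncomputable def shearSlope (k : ℝ) (v : Pt) : ℝ := v 1 / shearCoord k v

lemma shearSlope_smul (k : ℝ) (v : Pt) {c : ℝ} (hc : c ≠ 0) :
    shearSlope k (c • v) = shearSlope k v := by
  simp only [shearSlope, map_smul, Pi.smul_apply, smul_eq_mul]
  exact mul_div_mul_left _ _ hc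

lemma shearSlope_comm (k : ℝ) (x y : Pt) : shearSlope k (x - y) = shearSlope k (y - x) := by
  rw [← neg_sub, ← neg_one_smul ℝ (y - x), shearSlope_smul k _ (by norm_num)]

lemma eq_smul_of_shearSlope_eq {k : ℝ} {v w : Pt} (hv : shearCoord k v ≠ 0)
    (hw : shearCoord k w ≠ 0) (h : shearSlope k v = shearSlope k w) :
    w = (shearCoord k w / shearCoord k v) • v := by
  rw [shearSlope, shearSlope, div_eq_div_iff hv hw] at h
  simp only [shearCoord_apply] at hv hw h ⊢
  ext i
  fin_cases i
  · simp; field_simp; linear_combination k * h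
  · simp; field_simp; linear_combination -h

lemma collinear_of_shearSlope_eq {k : ℝ} {a q r : Pt} (hq : shearCoord k (q - a) ≠ 0)
    (hr : shearCoord k (r - a) ≠ 0) (h : shearSlope k (q - a) = shearSlope k (r - a)) :
    Collinear ℝ ({a, q, r} : Set Pt) := by
  have hmem : r ∈ line[ℝ, a, q] := by
    convert AffineMap.lineMap_mem_affineSpan_pair (shearCoord k (r - a) / shearCoord k (q - a)) a q
    rw [AffineMap.lineMap_apply, vsub_eq_sub, vadd_eq_add, ← eq_smul_of_shearSlope_eq hq hr h,
      sub_add_cancel]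
  have := collinear_insert_of_mem_affineSpan_pair hmem
  rwa [Set.insert_comm r a, Set.pair_comm r q] at this

-- Each factor is a signed triangle area over two shear-coordinate differences; the numerators of
-- the two sides agree up to the sign `(-1)³`, and so do their denominators.
lemma shearSlope_cyclic {k : ℝ} {x y z p : Pt}
    (hxy : shearCoord k x ≠ shearCoord k y) (hxz : shearCoord k x ≠ shearCoord k z)
    (hyz : shearCoord k y ≠ shearCoord k z) (hpx : shearCoord k p ≠ shearCoord k x)
    (hpy : shearCoord k p ≠ shearCoord k y) (hpz : shearCoord k p ≠ shearCoord k z) :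
    (shearSlope k (p - x) - shearSlope k (y - x)) * (shearSlope k (p - y) - shearSlope k (z - y)) *
        (shearSlope k (p - z) - shearSlope k (x - z)) =
      (shearSlope k (p - x) - shearSlope k (z - x)) *
        (shearSlope k (p - y) - shearSlope k (x - y)) *
        (shearSlope k (p - z) - shearSlope k (y - z)) := by
  simp only [shearSlope, map_sub, Pi.sub_apply]
  have := sub_ne_zero.2 hxy; have := sub_ne_zero.2 hxz; have := sub_ne_zero.2 hyz
  have := sub_ne_zero.2 hxy.symm; have := sub_ne_zero.2 hxz.symm; have := sub_ne_zero.2 hyz.symm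
  have := sub_ne_zero.2 hpx; have := sub_ne_zero.2 hpy; have := sub_ne_zero.2 hpz
  field_simp
  ring

lemma exists_shearCoord_injOn (P : Finset Pt) : ∃ k, Set.InjOn (shearCoord k) P := by
  obtain ⟨k, hk⟩ := Infinite.exists_notMem_finset
    ((P ×ˢ P).image fun q => (q.2 0 - q.1 0) / (q.1 1 - q.2 1))
  refine ⟨k, fun x hx y hy hxy => ?_⟩
  simp only [shearCoord_apply] at hxy
  by_cases h1 : x 1 = y 1
  · ext i; fin_cases i
    · simp; linear_combination hxy - k * h1
    · exact h1
  · refine absurd (mem_image.2 ⟨(x, y), mem_product.2 ⟨hx, hy⟩, ?_⟩) hk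
    field_simp [sub_ne_zero.2 h1]
    linear_combination -hxy

lemma shearCoord_sub_ne_zero {k : ℝ} {P : Finset Pt} (hk : Set.InjOn (shearCoord k) P)
    {x y : Pt} (hx : x ∈ P) (hy : y ∈ P) (hxy : x ≠ y) : shearCoord k (x - y) ≠ 0 := by
  rw [map_sub, sub_ne_zero]
  exact hk.ne hx hy hxy

noncomputable def projSlope (k : ℝ) : Projectivization ℝ Pt → ℝ :=
  Projectivization.lift (fun v => shearSlope k v) fun v w t hvw => by
    have ht : t ≠ 0 := by
      rintro rfl
      exact v.2 (by simpa using hvw)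
    simp only [hvw, shearSlope_smul k _ ht]

lemma projSlope_injOn {k : ℝ} {P : Finset Pt} (hk : Set.InjOn (shearCoord k) P) :
    Set.InjOn (projSlope k)
      {d | ∃ x ∈ P, ∃ y ∈ P, ∃ h : x - y ≠ 0, d = Projectivization.mk ℝ (x - y) h} := by
  rintro _ ⟨x, hx, y, hy, hxy, rfl⟩ _ ⟨u, hu, v, hv, huv, rfl⟩ h
  have hw := shearCoord_sub_ne_zero hk hx hy (sub_ne_zero.1 hxy)
  rw [Projectivization.mk_eq_mk_iff']
  exact ⟨_, (eq_smul_of_shearSlope_eq (shearCoord_sub_ne_zero hk hu hv (sub_ne_zero.1 huv)) hw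
    h.symm).symm⟩

noncomputable def chordSlopes (k : ℝ) (P : Finset Pt) (a : Pt) : Finset ℝ :=
  (P.erase a).image fun q => shearSlope k (q - a)

noncomputable def slopes (k : ℝ) (P : Finset Pt) : Finset ℝ := P.biUnion (chordSlopes k P)

lemma chordSlopes_subset_slopes (k : ℝ) {P : Finset Pt} {a : Pt} (ha : a ∈ P) :
    chordSlopes k P a ⊆ slopes k P :=
  subset_biUnion_of_mem (chordSlopes k P) ha

lemma coe_slopes (k : ℝ) (P : Finset Pt) :
    (slopes k P : Set ℝ) = projSlope k ''
      {d | ∃ x ∈ P, ∃ y ∈ P, ∃ h : x - y ≠ 0, d = Projectivization.mk ℝ (x - y) h} := by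
  ext s
  simp only [slopes, chordSlopes, coe_biUnion, coe_image, coe_erase, Set.mem_iUnion,
    Set.mem_image, Set.mem_sdiff, Set.mem_ofPred_eq]
  constructor
  · rintro ⟨a, ha, q, ⟨hq, hqa⟩, rfl⟩
    exact ⟨_, ⟨q, hq, a, ha, sub_ne_zero.2 hqa, rfl⟩, rfl⟩
  · rintro ⟨_, ⟨x, hx, y, hy, hxy, rfl⟩, rfl⟩
    exact ⟨y, hy, x, ⟨hx, sub_ne_zero.1 hxy⟩, rfl⟩

lemma card_slopes {k : ℝ} {P : Finset Pt} (hk : Set.InjOn (shearCoord k) P) :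
    (slopes k P).card =
      {d | ∃ x ∈ P, ∃ y ∈ P, ∃ h : x - y ≠ 0, d = Projectivization.mk ℝ (x - y) h}.ncard := by
  rw [← Set.ncard_coe_finset, coe_slopes, (projSlope_injOn hk).ncard_image]

lemma shearSlope_injOn {k : ℝ} {P : Finset Pt} (hk : Set.InjOn (shearCoord k) P)
    (hgp : GenPos P) {a : Pt} (ha : a ∈ P) :
    Set.InjOn (fun q => shearSlope k (q - a)) (P.erase a) := by
  intro q hq r hr h
  obtain ⟨hqa, hq⟩ := mem_erase.1 hq
  obtain ⟨hra, hr⟩ := mem_erase.1 hr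
  by_contra hqr
  exact hgp a ha q hq r hr (Ne.symm hqa) (Ne.symm hra) hqr <| collinear_of_shearSlope_eq
    (shearCoord_sub_ne_zero hk hq ha hqa) (shearCoord_sub_ne_zero hk hr ha hra) h

lemma exists_tangentSlope {k : ℝ} {P : Finset Pt} (hk : Set.InjOn (shearCoord k) P)
    (hgp : GenPos P) (hcard : (slopes k P).card = P.card) {a : Pt} (ha : a ∈ P) :
    ∃ t, slopes k P \ chordSlopes k P a = {t} := by
  have hchord : (chordSlopes k P a).card = P.card - 1 := by
    rw [chordSlopes, card_image_of_injOn (shearSlope_injOn hk hgp ha), card_erase_of_mem ha]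
  apply card_eq_one.1
  rw [card_sdiff_of_subset (chordSlopes_subset_slopes k ha), hchord, hcard]
  have := card_pos.2 ⟨a, ha⟩
  omega

lemma tangent_notMem_chordSlopes {k : ℝ} {P : Finset Pt} {τ : Pt → ℝ}
    (hτ : ∀ a ∈ P, slopes k P \ chordSlopes k P a = {τ a}) {a : Pt} (ha : a ∈ P) :
    τ a ∉ chordSlopes k P a :=
  (mem_sdiff.1 (hτ a ha ▸ mem_singleton_self (τ a))).2

lemma shearSlope_ne_tangent {k : ℝ} {P : Finset Pt} {τ : Pt → ℝ}
    (hτ : ∀ a ∈ P, slopes k P \ chordSlopes k P a = {τ a}) {a q : Pt} (ha : a ∈ P)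
    (hq : q ∈ P) (hqa : q ≠ a) : shearSlope k (q - a) ≠ τ a := fun h =>
  tangent_notMem_chordSlopes hτ ha (h ▸ mem_image_of_mem _ (mem_erase.2 ⟨hqa, hq⟩))

noncomputable def pencilProd (k : ℝ) (P : Finset Pt) (x y : Pt) : ℝ :=
  ∏ q ∈ (P.erase x).erase y, (shearSlope k (q - x) - shearSlope k (y - x))

lemma pencilProd_ne_zero {k : ℝ} {P : Finset Pt} (hk : Set.InjOn (shearCoord k) P)
    (hgp : GenPos P) {x y : Pt} (hx : x ∈ P) (hy : y ∈ P) (hyx : y ≠ x) :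
    pencilProd k P x y ≠ 0 := by
  refine prod_ne_zero_iff.2 fun q hq => sub_ne_zero.2 fun h => ?_
  obtain ⟨hqy, hq⟩ := mem_erase.1 hq
  exact hqy (shearSlope_injOn hk hgp hx hq (mem_erase.2 ⟨hyx, hy⟩) h)

lemma prod_erase_slopes_sub {k : ℝ} {P : Finset Pt} {τ : Pt → ℝ} (hk : Set.InjOn (shearCoord k) P)
    (hgp : GenPos P) (hτ : ∀ a ∈ P, slopes k P \ chordSlopes k P a = {τ a}) {x y : Pt}
    (hx : x ∈ P) (hy : y ∈ P) (hyx : y ≠ x) :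
    ∏ s ∈ (slopes k P).erase (shearSlope k (y - x)), (s - shearSlope k (y - x)) =
      (τ x - shearSlope k (y - x)) * pencilProd k P x y := by
  -- the slopes other than that of `xy` are `τ x` and those of the chords from `x` to `P \ {x, y}`
  set f := fun q => shearSlope k (q - x)
  have hinj := shearSlope_injOn hk hgp hx
  have hy' : y ∈ P.erase x := mem_erase.2 ⟨hyx, hy⟩
  have hchord : chordSlopes k P x = insert (f y) (((P.erase x).erase y).image f) := by
    rw [chordSlopes, ← image_insert, insert_erase hy']
  have hslopes : slopes k P = insert (τ x) (chordSlopes k P x) := by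
    nth_rw 1 [← sdiff_union_of_subset (chordSlopes_subset_slopes k hx), hτ x hx, insert_eq]
  have hfy : f y ∉ ((P.erase x).erase y).image f := by
    simp only [mem_image, not_exists, not_and]
    exact fun q hq h => (mem_erase.1 hq).1 (hinj (mem_erase.1 hq).2 hy' h)
  have hτx : τ x ∉ ((P.erase x).erase y).image f := fun h =>
    tangent_notMem_chordSlopes hτ hx (image_subset_image (erase_subset _ _) h)
  rw [hslopes, hchord, erase_insert_of_ne (shearSlope_ne_tangent hτ hx hy hyx).symm,
    erase_insert hfy, prod_insert hτx, prod_image (hinj.mono (coe_subset.2 (erase_subset _ _))),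
    pencilProd]

lemma tangent_mul_pencilProd_comm {k : ℝ} {P : Finset Pt} {τ : Pt → ℝ}
    (hk : Set.InjOn (shearCoord k) P) (hgp : GenPos P)
    (hτ : ∀ a ∈ P, slopes k P \ chordSlopes k P a = {τ a}) {x y : Pt}
    (hx : x ∈ P) (hy : y ∈ P) (hyx : y ≠ x) :
    (τ x - shearSlope k (y - x)) * pencilProd k P x y =
      (τ y - shearSlope k (x - y)) * pencilProd k P y x := by
  rw [← prod_erase_slopes_sub hk hgp hτ hx hy hyx, ← prod_erase_slopes_sub hk hgp hτ hy hx hyx.symm,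
    shearSlope_comm]

lemma pencilProd_eq_mul_prod {k : ℝ} {P : Finset Pt} {x y z : Pt}
    (hz : z ∈ (P.erase x).erase y) :
    pencilProd k P x y = (shearSlope k (z - x) - shearSlope k (y - x)) *
      ∏ q ∈ ((P.erase x).erase y).erase z, (shearSlope k (q - x) - shearSlope k (y - x)) :=
  (mul_prod_erase _ _ hz).symm

lemma pencilProd_cyclic {k : ℝ} {P : Finset Pt} (hk : Set.InjOn (shearCoord k) P)
    {x y z : Pt} (hx : x ∈ P) (hy : y ∈ P) (hz : z ∈ P) (hyx : y ≠ x) (hzx : z ≠ x)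
    (hzy : z ≠ y) :
    pencilProd k P x y * pencilProd k P y z * pencilProd k P z x =
      -(pencilProd k P y x * pencilProd k P z y * pencilProd k P x z) := by
  have hprod : ∏ q ∈ ((P.erase x).erase y).erase z,
      (shearSlope k (q - x) - shearSlope k (y - x)) *
        (shearSlope k (q - y) - shearSlope k (z - y)) * (shearSlope k (q - z) - shearSlope k (x - z)) =
      ∏ q ∈ ((P.erase x).erase y).erase z,
      (shearSlope k (q - x) - shearSlope k (z - x)) *
        (shearSlope k (q - y) - shearSlope k (x - y)) * (shearSlope k (q - z) - shearSlope k (y - z)) := by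
    refine prod_congr rfl fun q hq => ?_
    simp only [mem_erase] at hq
    exact shearSlope_cyclic (hk.ne hx hy hyx.symm) (hk.ne hx hz hzx.symm) (hk.ne hy hz hzy.symm)
      (hk.ne hq.2.2.2 hx hq.2.2.1) (hk.ne hq.2.2.2 hy hq.2.1) (hk.ne hq.2.2.2 hz hq.1)
  simp only [prod_mul_distrib] at hprod
  rw [pencilProd_eq_mul_prod (z := z), pencilProd_eq_mul_prod (z := x),
    pencilProd_eq_mul_prod (z := y), pencilProd_eq_mul_prod (z := z),
    pencilProd_eq_mul_prod (z := x), pencilProd_eq_mul_prod (z := y)]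
  · simp only [erase_right_comm] at hprod ⊢
    linear_combination (shearSlope k (z - x) - shearSlope k (y - x)) *
      (shearSlope k (x - y) - shearSlope k (z - y)) *
      (shearSlope k (y - z) - shearSlope k (x - z)) * hprod
  all_goals simp [*, Ne.symm]

lemma segre_lemma {k : ℝ} {P : Finset Pt} {τ : Pt → ℝ} (hk : Set.InjOn (shearCoord k) P)
    (hgp : GenPos P) (hτ : ∀ a ∈ P, slopes k P \ chordSlopes k P a = {τ a}) {x y z : Pt}
    (hx : x ∈ P) (hy : y ∈ P) (hz : z ∈ P) (hyx : y ≠ x) (hzx : z ≠ x) (hzy : z ≠ y) :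
    (τ x - shearSlope k (y - x)) * (τ y - shearSlope k (z - y)) * (τ z - shearSlope k (x - z)) =
      -((τ x - shearSlope k (z - x)) * (τ y - shearSlope k (x - y)) *
        (τ z - shearSlope k (y - z))) := by
  have e1 := tangent_mul_pencilProd_comm hk hgp hτ hx hy hyx
  have e2 := tangent_mul_pencilProd_comm hk hgp hτ hy hz hzy
  have e3 := tangent_mul_pencilProd_comm hk hgp hτ hz hx hzx.symm
  have hne : pencilProd k P y x * pencilProd k P z y * pencilProd k P x z ≠ 0 :=
    mul_ne_zero (mul_ne_zero (pencilProd_ne_zero hk hgp hy hx hyx.symm)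
      (pencilProd_ne_zero hk hgp hz hy hzy.symm)) (pencilProd_ne_zero hk hgp hx hz hzx)
  refine mul_right_cancel₀ hne ?_
  calc _ = -((τ x - shearSlope k (y - x)) * pencilProd k P x y *
        ((τ y - shearSlope k (z - y)) * pencilProd k P y z) *
        ((τ z - shearSlope k (x - z)) * pencilProd k P z x)) := by
        linear_combination (τ x - shearSlope k (y - x)) * (τ y - shearSlope k (z - y)) *
          (τ z - shearSlope k (x - z)) * pencilProd_cyclic hk hx hy hz hyx hzx hzy
    _ = _ := by rw [e1, e2, e3]; ring

-- `m, α, β, α', β', γ` stand for the slopes of `ab, ac, bc, ap, bp, cp`, and `A, B, C, T` for the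
-- tangent slopes at `a, b, c, p`. The relation `h1` determines `C`, and `h2`, `h3` each determine
-- `T`; eliminating both leaves the conic condition times `(T - α') (α - C)`.
lemma conic_condition_of_segre {K : Type*} [Field K] [NeZero (2 : K)]
    {m α β α' β' γ A B C T : K}
    (h0 : (α' - m) * (β' - β) * (γ - α) = (α' - α) * (β' - m) * (γ - β))
    (h1 : (A - m) * (B - β) * (C - α) = -((A - α) * (B - m) * (C - β)))
    (h2 : (A - m) * (B - β') * (T - α') = -((A - α') * (B - m) * (T - β')))
    (h3 : (A - α) * (C - γ) * (T - α') = -((A - α') * (C - α) * (T - γ)))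
    (hT : T ≠ α') (hC : C ≠ α) :
    (α - m) * (β - m) * (α' - A) * (β' - B) = (α - A) * (β - B) * (α' - m) * (β' - m) := by
  have key : 2 * (T - α') * (α - C) *
      ((α - m) * (β - m) * (α' - A) * (β' - B) - (α - A) * (β - B) * (α' - m) * (β' - m)) = 0 := by
    linear_combination ((B - m) * ((A - α) * (T - α') + (A - α') * (C - α))) * h0
      + ((β' - m) * (α' - α) * (T - α')) * h1 + ((β - m) * (α' - α) * (C - α)) * h2
      + ((B - m) * ((α - m) * (β' - m) - (β - m) * (α' - m))) * h3
  simpa [sub_eq_zero, hT, hC.symm, two_ne_zero] using key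

lemma tangentConic_slope_condition {k : ℝ} {P : Finset Pt} {τ : Pt → ℝ}
    (hk : Set.InjOn (shearCoord k) P) (hgp : GenPos P)
    (hτ : ∀ a ∈ P, slopes k P \ chordSlopes k P a = {τ a}) {a b c p : Pt}
    (ha : a ∈ P) (hb : b ∈ P) (hc : c ∈ P) (hp : p ∈ P) (hba : b ≠ a) (hca : c ≠ a)
    (hcb : c ≠ b) (hpa : p ≠ a) (hpb : p ≠ b) (hpc : p ≠ c) :
    (shearSlope k (c - a) - shearSlope k (b - a)) * (shearSlope k (c - b) - shearSlope k (b - a)) *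
        (shearSlope k (p - a) - τ a) * (shearSlope k (p - b) - τ b) =
      (shearSlope k (c - a) - τ a) * (shearSlope k (c - b) - τ b) *
        (shearSlope k (p - a) - shearSlope k (b - a)) *
        (shearSlope k (p - b) - shearSlope k (b - a)) := by
  have h0 := shearSlope_cyclic (hk.ne ha hb hba.symm) (hk.ne ha hc hca.symm)
    (hk.ne hb hc hcb.symm) (hk.ne hp ha hpa) (hk.ne hp hb hpb) (hk.ne hp hc hpc)
  have h1 := segre_lemma hk hgp hτ ha hb hc hba hca hcb
  have h2 := segre_lemma hk hgp hτ ha hb hp hba hpa hpb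
  have h3 := segre_lemma hk hgp hτ ha hc hp hca hpa hpc
  rw [shearSlope_comm k a c, shearSlope_comm k a b, shearSlope_comm k b c] at h0 h1
  rw [shearSlope_comm k a p, shearSlope_comm k a b, shearSlope_comm k b p] at h2
  rw [shearSlope_comm k a p, shearSlope_comm k a c, shearSlope_comm k c p] at h3
  refine conic_condition_of_segre h0 h1 h2 h3 ?_ ?_
  · rw [← shearSlope_comm]
    exact (shearSlope_ne_tangent hτ hp ha hpa.symm).symm
  · rw [← shearSlope_comm]
    exact (shearSlope_ne_tangent hτ hc ha hca.symm).symm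

noncomputable def linePoly (k : ℝ) (a : Pt) (t : ℝ) : MvPolynomial (Fin 2) ℝ :=
  X 1 - C (a 1) - C t * (X 0 + C k * X 1 - C (shearCoord k a))

lemma eval_linePoly (k t : ℝ) (a q : Pt) :
    eval q (linePoly k a t) = (q - a) 1 - t * shearCoord k (q - a) := by
  simp only [linePoly, map_sub, map_mul, map_add, eval_X, eval_C,
    Pi.sub_apply, shearCoord_apply]

lemma eval_linePoly_self (k t : ℝ) (a : Pt) : eval a (linePoly k a t) = 0 := by
  simp [eval_linePoly]

lemma eval_linePoly_midpoint (k t : ℝ) (x a b : Pt) :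
    eval ((2⁻¹ : ℝ) • (a + b)) (linePoly k x t) =
      (eval a (linePoly k x t) + eval b (linePoly k x t)) / 2 := by
  simp only [eval_linePoly, map_sub, map_smul, map_add, shearCoord_apply, Pi.sub_apply,
    Pi.smul_apply, Pi.add_apply, smul_eq_mul]
  ring

lemma eval_linePoly_eq_mul {k : ℝ} (t : ℝ) {a q : Pt} (h : shearCoord k (q - a) ≠ 0) :
    eval q (linePoly k a t) = shearCoord k (q - a) * (shearSlope k (q - a) - t) := by
  rw [eval_linePoly, shearSlope]
  field_simp

lemma eval_linePoly_chord {k : ℝ} {a b : Pt} (hba : shearCoord k (b - a) ≠ 0) (q : Pt) :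
    eval q (linePoly k a (shearSlope k (b - a))) =
      eval q (linePoly k b (shearSlope k (b - a))) := by
  rw [eval_linePoly, eval_linePoly, shearSlope]
  field_simp
  simp only [map_sub, Pi.sub_apply]
  ring

lemma totalDegree_linePoly_le (k : ℝ) (a : Pt) (t : ℝ) : (linePoly k a t).totalDegree ≤ 1 := by
  have hX (i : Fin 2) : (X i : MvPolynomial (Fin 2) ℝ).totalDegree ≤ 1 := (totalDegree_X i).le
  have hC (r : ℝ) : (C r : MvPolynomial (Fin 2) ℝ).totalDegree ≤ 1 := by simp [totalDegree_C]
  have hCmul (r : ℝ) {p : MvPolynomial (Fin 2) ℝ} (hp : p.totalDegree ≤ 1) :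
      (C r * p).totalDegree ≤ 1 := by
    rw [C_mul']
    exact (totalDegree_smul_le _ _).trans hp
  have hsub {p q : MvPolynomial (Fin 2) ℝ} (hp : p.totalDegree ≤ 1) (hq : q.totalDegree ≤ 1) :
      (p - q).totalDegree ≤ 1 := (totalDegree_sub _ _).trans (max_le hp hq)
  exact hsub (hsub (hX 1) (hC _)) (hCmul _ (hsub ((totalDegree_add _ _).trans
    (max_le (hX 0) (hCmul _ (hX 1)))) (hC _)))

-- The member through `c` of the pencil `λ ℓ_a ℓ_b + μ ℓ_ab²`, where `ℓ_a`, `ℓ_b` are the lines of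
-- slopes `ta`, `tb` through `a`, `b`: all of these conics touch `ℓ_a` at `a` and `ℓ_b` at `b`.
noncomputable def tangentConic (k : ℝ) (a b c : Pt) (ta tb : ℝ) : MvPolynomial (Fin 2) ℝ :=
  C (eval c (linePoly k a (shearSlope k (b - a))) ^ 2) * (linePoly k a ta * linePoly k b tb) -
    C (eval c (linePoly k a ta) * eval c (linePoly k b tb)) *
      linePoly k a (shearSlope k (b - a)) ^ 2

lemma totalDegree_tangentConic_le (k : ℝ) (a b c : Pt) (ta tb : ℝ) :
    (tangentConic k a b c ta tb).totalDegree ≤ 2 := by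
  have h2 {p q : MvPolynomial (Fin 2) ℝ} (hp : p.totalDegree ≤ 1) (hq : q.totalDegree ≤ 1) :
      (p * q).totalDegree ≤ 2 := (totalDegree_mul _ _).trans (by omega)
  refine (totalDegree_sub _ _).trans (max_le ?_ ?_) <;> refine (totalDegree_mul _ _).trans ?_ <;>
    rw [totalDegree_C, zero_add]
  · exact h2 (totalDegree_linePoly_le _ _ _) (totalDegree_linePoly_le _ _ _)
  · exact sq (linePoly k a _) ▸ h2 (totalDegree_linePoly_le _ _ _) (totalDegree_linePoly_le _ _ _)

lemma eval_tangentConic_left (k : ℝ) (a b c : Pt) (ta tb : ℝ) :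
    eval a (tangentConic k a b c ta tb) = 0 := by
  simp [tangentConic, eval_linePoly_self]

lemma eval_tangentConic_right {k : ℝ} {a b : Pt} (hba : shearCoord k (b - a) ≠ 0) (c : Pt)
    (ta tb : ℝ) : eval b (tangentConic k a b c ta tb) = 0 := by
  simp [tangentConic, eval_linePoly_self, eval_linePoly_chord hba]

lemma eval_tangentConic_through (k : ℝ) (a b c : Pt) (ta tb : ℝ) :
    eval c (tangentConic k a b c ta tb) = 0 := by
  simp only [tangentConic, map_sub, map_mul, map_pow, eval_C]
  ring

lemma eval_sq_linePoly_chord {k : ℝ} {a b q : Pt} (hba : shearCoord k (b - a) ≠ 0)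
    (hqa : shearCoord k (q - a) ≠ 0) (hqb : shearCoord k (q - b) ≠ 0) :
    eval q (linePoly k a (shearSlope k (b - a))) ^ 2 =
      shearCoord k (q - a) * (shearSlope k (q - a) - shearSlope k (b - a)) *
        (shearCoord k (q - b) * (shearSlope k (q - b) - shearSlope k (b - a))) := by
  rw [sq]
  nth_rw 2 [eval_linePoly_chord hba]
  rw [eval_linePoly_eq_mul _ hqa, eval_linePoly_eq_mul _ hqb]

lemma eval_tangentConic_eq_zero {k ta tb : ℝ} {a b c p : Pt} (hba : shearCoord k (b - a) ≠ 0)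
    (hca : shearCoord k (c - a) ≠ 0) (hcb : shearCoord k (c - b) ≠ 0)
    (hpa : shearCoord k (p - a) ≠ 0) (hpb : shearCoord k (p - b) ≠ 0)
    (h : (shearSlope k (c - a) - shearSlope k (b - a)) *
        (shearSlope k (c - b) - shearSlope k (b - a)) *
        (shearSlope k (p - a) - ta) * (shearSlope k (p - b) - tb) =
      (shearSlope k (c - a) - ta) * (shearSlope k (c - b) - tb) *
        (shearSlope k (p - a) - shearSlope k (b - a)) *
        (shearSlope k (p - b) - shearSlope k (b - a))) :
    eval p (tangentConic k a b c ta tb) = 0 := by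
  simp only [tangentConic, map_sub, map_mul, map_pow, eval_C]
  rw [eval_sq_linePoly_chord hba hca hcb, eval_sq_linePoly_chord hba hpa hpb,
    eval_linePoly_eq_mul _ hca, eval_linePoly_eq_mul _ hcb, eval_linePoly_eq_mul _ hpa,
    eval_linePoly_eq_mul _ hpb]
  linear_combination shearCoord k (c - a) * shearCoord k (c - b) * shearCoord k (p - a) *
    shearCoord k (p - b) * h

lemma eval_midpoint_tangentConic {k : ℝ} {a b : Pt} (hba : shearCoord k (b - a) ≠ 0)
    (c : Pt) (ta tb : ℝ) :
    eval ((2⁻¹ : ℝ) • (a + b)) (tangentConic k a b c ta tb) =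
      eval c (linePoly k a (shearSlope k (b - a))) ^ 2 * eval b (linePoly k a ta) *
        eval a (linePoly k b tb) / 4 := by
  have hb : eval b (linePoly k a (shearSlope k (b - a))) = 0 := by
    rw [eval_linePoly_chord hba, eval_linePoly_self]
  simp only [tangentConic, map_sub, map_mul, map_pow, eval_C, eval_linePoly_midpoint,
    eval_linePoly_self, hb]
  ring

lemma tangentConic_ne_zero {k : ℝ} {P : Finset Pt} {τ : Pt → ℝ}
    (hk : Set.InjOn (shearCoord k) P) (hgp : GenPos P)
    (hτ : ∀ a ∈ P, slopes k P \ chordSlopes k P a = {τ a}) {a b c : Pt} (ha : a ∈ P)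
    (hb : b ∈ P) (hc : c ∈ P) (hba : b ≠ a) (hca : c ≠ a) (hcb : c ≠ b) :
    tangentConic k a b c (τ a) (τ b) ≠ 0 := by
  have hwba := shearCoord_sub_ne_zero hk hb ha hba
  have hwca := shearCoord_sub_ne_zero hk hc ha hca
  have hwab := shearCoord_sub_ne_zero hk ha hb hba.symm
  have hc' : eval c (linePoly k a (shearSlope k (b - a))) ≠ 0 := by
    rw [eval_linePoly_eq_mul _ hwca]
    refine mul_ne_zero hwca (sub_ne_zero.2 fun h => hcb ?_)
    exact shearSlope_injOn hk hgp ha (mem_erase.2 ⟨hca, hc⟩) (mem_erase.2 ⟨hba, hb⟩) h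
  have hb' : eval b (linePoly k a (τ a)) ≠ 0 := by
    rw [eval_linePoly_eq_mul _ hwba]
    exact mul_ne_zero hwba (sub_ne_zero.2 (shearSlope_ne_tangent hτ ha hb hba))
  have ha' : eval a (linePoly k b (τ b)) ≠ 0 := by
    rw [eval_linePoly_eq_mul _ hwab]
    exact mul_ne_zero hwab (sub_ne_zero.2 (shearSlope_ne_tangent hτ hb ha hba.symm))
  intro h0
  have hmid := eval_midpoint_tangentConic hwba c (τ a) (τ b)
  rw [h0, map_zero, eq_comm] at hmid
  exact div_ne_zero (mul_ne_zero (mul_ne_zero (pow_ne_zero 2 hc') hb') ha') four_ne_zero hmid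

lemma eval_tangentConic_of_mem {k : ℝ} {P : Finset Pt} {τ : Pt → ℝ}
    (hk : Set.InjOn (shearCoord k) P) (hgp : GenPos P)
    (hτ : ∀ a ∈ P, slopes k P \ chordSlopes k P a = {τ a}) {a b c p : Pt} (ha : a ∈ P)
    (hb : b ∈ P) (hc : c ∈ P) (hba : b ≠ a) (hca : c ≠ a) (hcb : c ≠ b) (hp : p ∈ P) :
    eval p (tangentConic k a b c (τ a) (τ b)) = 0 := by
  have hw {x y : Pt} (hx : x ∈ P) (hy : y ∈ P) (hxy : x ≠ y) := shearCoord_sub_ne_zero hk hx hy hxy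
  rcases eq_or_ne p a with rfl | hpa
  · exact eval_tangentConic_left ..
  rcases eq_or_ne p b with rfl | hpb
  · exact eval_tangentConic_right (hw hp ha hba) ..
  rcases eq_or_ne p c with rfl | hpc
  · exact eval_tangentConic_through ..
  exact eval_tangentConic_eq_zero (hw hb ha hba) (hw hc ha hca) (hw hc hb hcb) (hw hp ha hpa)
    (hw hp hb hpb) (tangentConic_slope_condition hk hgp hτ ha hb hc hp hba hca hcb hpa hpb hpc)

lemma exists_conic_of_tangentSlopes {k : ℝ} {P : Finset Pt} {τ : Pt → ℝ}
    (hk : Set.InjOn (shearCoord k) P) (hgp : GenPos P)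
    (hτ : ∀ a ∈ P, slopes k P \ chordSlopes k P a = {τ a}) (hP : 2 < P.card) :
    ∃ f : MvPolynomial (Fin 2) ℝ, f ≠ 0 ∧ f.totalDegree ≤ 2 ∧ ∀ p ∈ P, eval p f = 0 := by
  obtain ⟨a, ha, b, hb, c, hc, hab, hac, hbc⟩ := two_lt_card.1 hP
  exact ⟨tangentConic k a b c (τ a) (τ b),
    tangentConic_ne_zero hk hgp hτ ha hb hc hab.symm hac.symm hbc.symm,
    totalDegree_tangentConic_le .., fun p hp =>
    eval_tangentConic_of_mem hk hgp hτ ha hb hc hab.symm hac.symm hbc.symm hp⟩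

theorem stmt12 (n : ℕ) (hn : 4 ≤ n) (P : Finset Pt) (hPcard : P.card = n)
    (hgp : GenPos ↑P)
    (hdirs : Set.ncard {d : Projectivization ℝ Pt |
      ∃ x ∈ P, ∃ y ∈ P, ∃ h : x - y ≠ 0, d = Projectivization.mk ℝ (x - y) h} = n) :
    ∃ f : MvPolynomial (Fin 2) ℝ, f ≠ 0 ∧ f.totalDegree ≤ 2 ∧
      ∀ p ∈ P, MvPolynomial.eval p f = 0 := by
  obtain ⟨k, hk⟩ := exists_shearCoord_injOn P
  have hcard : (slopes k P).card = P.card := by rw [card_slopes hk, hdirs, hPcard]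
  choose! τ hτ using fun a (ha : a ∈ P) => exists_tangentSlope hk hgp hcard ha
  exact exists_conic_of_tangentSlopes hk hgp hτ (by omega)
end

section
/- Let B, G, R be pairwise disjoint sets of n points each with B ∪ G in general position, such that every line through a point b ∈ B and a point g ∈ G contains a point r ∈ R not lying between b and g. Then every line through two points of different colors (from B ∪ G ∪ R) contains exactly one point of the third color. -/
/-!
Fix a blue point `b`. The lines `bg`, `g ∈ G`, are pairwise distinct by general position, and
each carries a red point; a red point lies on only one line through `b`. This gives an injection
`G → R`, hence a bijection since `|G| = |R|`: every line through `b` and a green or a red point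
carries exactly one point of the third colour. Exchanging the roles of blue and green gives the
lines through a green and a red point.
-/

open Finset

theorem Finset.existsUnique_of_card_le_of_forall_exists {β γ : Type*} {s : Finset β}
    {t : Finset γ} {Q : β → γ → Prop} (hcard : #t ≤ #s) (hex : ∀ a ∈ s, ∃ b ∈ t, Q a b)
    (huniq : ∀ b ∈ t, ∀ a ∈ s, ∀ a' ∈ s, Q a b → Q a' b → a = a') :
    (∀ a ∈ s, ∃! b, b ∈ t ∧ Q a b) ∧ (∀ b ∈ t, ∃! a, a ∈ s ∧ Q a b) := by
  choose f hft hQ using hex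
  have hsurj : ∀ b ∈ t, ∃ a ha, b = f a ha :=
    surj_on_of_inj_on_of_card_le f hft
      (fun a a' ha ha' h => huniq _ (hft a ha) a ha a' ha' (hQ a ha) (h ▸ hQ a' ha')) hcard
  refine ⟨fun a ha => ⟨f a ha, ⟨hft a ha, hQ a ha⟩, ?_⟩, fun b hb => ?_⟩
  · rintro b ⟨hb, hab⟩
    obtain ⟨a', ha', rfl⟩ := hsurj b hb
    obtain rfl := huniq _ hb a ha a' ha' hab (hQ a' ha')
    rfl
  · obtain ⟨a, ha, rfl⟩ := hsurj b hb
    exact ⟨a, ⟨ha, hQ a ha⟩, fun a' ⟨ha', hQ'⟩ => huniq _ hb a' ha' a ha hQ' (hQ a ha)⟩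

theorem collinear_of_collinear_of_collinear {k V P : Type*} [Field k] [AddCommGroup V]
    [Module k V] [AddTorsor V P] {x y y' r : P} (hxr : x ≠ r)
    (h : Collinear k ({x, y, r} : Set P)) (h' : Collinear k ({x, y', r} : Set P)) :
    Collinear k ({x, y, y'} : Set P) :=
  collinear_triple_of_mem_affineSpan_pair (left_mem_affineSpan_pair k x r)
    (h.mem_affineSpan_of_mem_of_ne (by simp) (by simp) (by simp) hxr)
    (h'.mem_affineSpan_of_mem_of_ne (by simp) (by simp) (by simp) hxr)

theorem GenPos.eq_of_collinear_s13 {S : Set Pt} (hS : GenPos S) {x y y' r : Pt} (hx : x ∈ S)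
    (hy : y ∈ S) (hy' : y' ∈ S) (hxy : x ≠ y) (hxy' : x ≠ y') (hxr : x ≠ r)
    (h : Collinear ℝ ({x, y, r} : Set Pt)) (h' : Collinear ℝ ({x, y', r} : Set Pt)) : y = y' := by
  by_contra hyy'
  exact hS x hx y hy y' hy' hxy hxy' hyy' (collinear_of_collinear_of_collinear hxr h h')

theorem stmt13 (n : ℕ) (B G R : Finset Pt)
    (hB : B.card = n) (hG : G.card = n) (hR : R.card = n)
    (hBG : Disjoint B G) (hBR : Disjoint B R) (hGR : Disjoint G R)
    (hgp : GenPos ↑(B ∪ G))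
    (hpierce : ∀ b ∈ B, ∀ g ∈ G, ∃ r ∈ R,
      Collinear ℝ ({b, g, r} : Set Pt) ∧ r ∉ segment ℝ b g) :
    (∀ b ∈ B, ∀ g ∈ G, ∃! r : Pt, r ∈ R ∧ Collinear ℝ ({b, g, r} : Set Pt)) ∧
    (∀ b ∈ B, ∀ r ∈ R, ∃! g : Pt, g ∈ G ∧ Collinear ℝ ({b, r, g} : Set Pt)) ∧
    (∀ g ∈ G, ∀ r ∈ R, ∃! b : Pt, b ∈ B ∧ Collinear ℝ ({g, r, b} : Set Pt)) := by
  have hB' {b} (hb : b ∈ B) : b ∈ (↑(B ∪ G) : Set Pt) := by simp [hb]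
  have hG' {g} (hg : g ∈ G) : g ∈ (↑(B ∪ G) : Set Pt) := by simp [hg]
  have hbg {b g} (hb : b ∈ B) (hg : g ∈ G) : b ≠ g := fun h => disjoint_left.1 hBG hb (h ▸ hg)
  have hbr {b r} (hb : b ∈ B) (hr : r ∈ R) : b ≠ r := fun h => disjoint_left.1 hBR hb (h ▸ hr)
  have hgr {g r} (hg : g ∈ G) (hr : r ∈ R) : g ≠ r := fun h => disjoint_left.1 hGR hg (h ▸ hr)
  have through_blue (b) (hb : b ∈ B) := existsUnique_of_card_le_of_forall_exists
    (Q := fun g r => Collinear ℝ ({b, g, r} : Set Pt)) (hR.trans hG.symm).le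
    (fun g hg => (hpierce b hb g hg).imp fun _ => And.imp_right And.left)
    (fun r hr g hg g' hg' => hgp.eq_of_collinear_s13 (hB' hb) (hG' hg) (hG' hg')
      (hbg hb hg) (hbg hb hg') (hbr hb hr))
  have through_green (g) (hg : g ∈ G) := existsUnique_of_card_le_of_forall_exists
    (Q := fun b r => Collinear ℝ ({g, b, r} : Set Pt)) (hR.trans hB.symm).le
    (fun b hb => (hpierce b hb g hg).imp fun _ =>
      And.imp_right fun h => Set.insert_comm b g _ ▸ h.1)
    (fun r hr b hb b' hb' => hgp.eq_of_collinear_s13 (hG' hg) (hB' hb) (hB' hb')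
      (hbg hb hg).symm (hbg hb' hg).symm (hgr hg hr))
  refine ⟨fun b hb => (through_blue b hb).1, fun b hb r hr => ?_, fun g hg r hr => ?_⟩
  · simpa only [Set.pair_comm r] using (through_blue b hb).2 r hr
  · simpa only [Set.pair_comm r] using (through_green g hg).2 r hr
end

section
/- For n even, the vertex set P of a regular n-gon admits a set R of n points disjoint from P such that every line through two points of P passes through a point of R, and moreover the point of R can always be taken outside the segment determined by the two points: take R to be the n points at infinity corresponding to the n directions spanned by P. -/
/-!
The chord from vertex `s` to vertex `t` of the regular `n`-gon is, by sum-to-product,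
`2 sin (π (s - t) / n)` times the unit vector orthogonal to angle `π (s + t) / n`. Up to sign that
direction depends only on `s + t mod n`, and the `n` directions orthogonal to the angles
`π k / n`, `0 ≤ k < n`, are pairwise non-parallel because these angles differ by less than `π`.
-/

open Real

noncomputable def unitVec (θ : ℝ) : Pt := ![cos θ, sin θ]

lemma unitVec_ne_zero (θ : ℝ) : unitVec θ ≠ 0 := by
  intro h
  have hc : cos θ = 0 := congrFun h 0
  have hs : sin θ = 0 := congrFun h 1
  simpa [hc, hs] using sin_sq_add_cos_sq θ

lemma unitVec_add_nat_mul_pi (θ : ℝ) (k : ℕ) :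
    unitVec (θ + k * π) = ((-1) ^ k : ℝ) • unitVec θ := by
  ext i
  fin_cases i <;> simp [unitVec, cos_add_nat_mul_pi, sin_add_nat_mul_pi]

lemma unitVec_sub_unitVec (α β : ℝ) :
    unitVec α - unitVec β = (2 * sin ((α - β) / 2)) • unitVec ((α + β) / 2 + π / 2) := by
  ext i
  fin_cases i
  · simp [unitVec, cos_add_pi_div_two, cos_sub_cos]
    ring
  · simp [unitVec, sin_add_pi_div_two, sin_sub_sin]

lemma eq_of_mk_unitVec_eq {θ φ : ℝ} (hlt : |θ - φ| < π)
    (h : Projectivization.mk ℝ (unitVec θ) (unitVec_ne_zero θ) =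
      Projectivization.mk ℝ (unitVec φ) (unitVec_ne_zero φ)) : θ = φ := by
  obtain ⟨a, ha⟩ := (Projectivization.mk_eq_mk_iff' ..).mp h
  have hc : a * cos φ = cos θ := congrFun ha 0
  have hs : a * sin φ = sin θ := congrFun ha 1
  have hsin : sin (θ - φ) = 0 := by
    rw [sin_sub, ← hc, ← hs]
    ring
  rw [abs_lt] at hlt
  exact sub_eq_zero.mp ((sin_eq_zero_iff_of_lt_of_lt hlt.1 hlt.2).mp hsin)

section RegularPolygon

variable {n : ℕ} [NeZero n]

noncomputable def chordAngle (k : ZMod n) : ℝ := π * k.val / n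

lemma chordAngle_mem_Ico (k : ZMod n) : chordAngle k ∈ Set.Ico 0 π := by
  have hn : (0 : ℝ) < n := Nat.cast_pos.mpr (NeZero.pos n)
  have hk : (k.val : ℝ) < n := by exact_mod_cast ZMod.val_lt k
  refine ⟨by unfold chordAngle; positivity, ?_⟩
  rw [chordAngle, div_lt_iff₀ hn]
  nlinarith [pi_pos]

lemma abs_chordAngle_sub_lt (k l : ZMod n) : |chordAngle k - chordAngle l| < π := by
  have hk := chordAngle_mem_Ico k
  have hl := chordAngle_mem_Ico l
  rw [abs_lt]
  constructor <;> linarith [hk.1, hk.2, hl.1, hl.2]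

lemma chordAngle_injective : Function.Injective (chordAngle (n := n)) := by
  intro k l h
  have hn : (n : ℝ) ≠ 0 := Nat.cast_ne_zero.mpr (NeZero.ne n)
  unfold chordAngle at h
  rw [div_left_inj' hn, mul_right_inj' pi_ne_zero, Nat.cast_inj] at h
  exact ZMod.val_injective n h

lemma exists_chordAngle_add (i j : ZMod n) :
    ∃ q : ℕ, chordAngle i + chordAngle j = chordAngle (i + j) + q * π := by
  have hn : (n : ℝ) ≠ 0 := Nat.cast_ne_zero.mpr (NeZero.ne n)
  refine ⟨(i.val + j.val) / n, ?_⟩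
  have hdiv : ((i + j).val : ℝ) + n * ((i.val + j.val) / n : ℕ) = i.val + j.val := by
    rw [ZMod.val_add]
    exact_mod_cast Nat.mod_add_div (i.val + j.val) n
  unfold chordAngle
  rw [← add_div, ← mul_add, ← hdiv]
  field_simp

noncomputable def chordDirection (k : ZMod n) : Projectivization ℝ Pt :=
  Projectivization.mk ℝ (unitVec (chordAngle k + π / 2)) (unitVec_ne_zero _)

lemma chordDirection_injective : Function.Injective (chordDirection (n := n)) := by
  intro k l h
  refine chordAngle_injective (add_right_cancel (eq_of_mk_unitVec_eq ?_ h))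
  simpa using abs_chordAngle_sub_lt k l

lemma exists_mk_unitVec_sub_eq_chordDirection {i j : ZMod n} (hij : i ≠ j) :
    ∃ h : unitVec (2 * chordAngle i) - unitVec (2 * chordAngle j) ≠ 0,
      Projectivization.mk ℝ _ h = chordDirection (i + j) := by
  obtain ⟨q, hq⟩ := exists_chordAngle_add i j
  have hsin : sin (chordAngle i - chordAngle j) ≠ 0 := by
    have hlt := abs_lt.mp (abs_chordAngle_sub_lt i j)
    rw [Ne, sin_eq_zero_iff_of_lt_of_lt hlt.1 hlt.2, sub_eq_zero]
    exact chordAngle_injective.ne hij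
  have hchord : unitVec (2 * chordAngle i) - unitVec (2 * chordAngle j) =
      (2 * sin (chordAngle i - chordAngle j) * (-1) ^ q) • unitVec (chordAngle (i + j) + π / 2) := by
    rw [unitVec_sub_unitVec, mul_smul _ ((-1 : ℝ) ^ q), ← unitVec_add_nat_mul_pi]
    congr 1
    · congr 2
      ring
    · congr 1
      linarith
  have hne : unitVec (2 * chordAngle i) - unitVec (2 * chordAngle j) ≠ 0 := by
    rw [hchord]
    exact smul_ne_zero (by simp [hsin]) (unitVec_ne_zero _)
  exact ⟨hne, (Projectivization.mk_eq_mk_iff' ..).mpr ⟨_, hchord.symm⟩⟩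

end RegularPolygon

theorem stmt18_general (n : ℕ) (hn : 2 ≤ n)
    (v : ZMod n → Pt)
    (hv : ∀ i : ZMod n, v i = ![Real.cos (2 * π * i.val / n), Real.sin (2 * π * i.val / n)]) :
    -- the directions of lines spanned by the vertices of the regular n-gon form a set R
    -- of exactly n points on the line at infinity, and every spanned line meets R there
    -- (hence outside the segment determined by its two spanning points):
    ∃ R : Set (Projectivization ℝ Pt), R.ncard = n ∧
      ∀ i j : ZMod n, i ≠ j → ∃ h : v i - v j ≠ 0, Projectivization.mk ℝ (v i - v j) h ∈ R := by
  have : NeZero n := ⟨by omega⟩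
  have hvertex : v = fun i => unitVec (2 * chordAngle i) := by
    funext i
    rw [hv, unitVec, chordAngle, mul_div_assoc', ← mul_assoc]
  subst hvertex
  refine ⟨Set.range (chordDirection (n := n)), ?_, fun i j hij => ?_⟩
  · rw [Set.ncard_range_of_injective chordDirection_injective, Nat.card_zmod]
  · obtain ⟨hne, hdir⟩ := exists_mk_unitVec_sub_eq_chordDirection hij
    exact ⟨hne, hdir ▸ Set.mem_range_self _⟩

theorem stmt18 (n : ℕ) (hn : 2 ≤ n) (heven : Even n)
    (v : ZMod n → Pt)
    (hv : ∀ i : ZMod n, v i = ![Real.cos (2 * π * i.val / n), Real.sin (2 * π * i.val / n)]) :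
    -- the directions of lines spanned by the vertices of the regular n-gon form a set R
    -- of exactly n points on the line at infinity, and every spanned line meets R there
    -- (hence outside the segment determined by its two spanning points):
    ∃ R : Set (Projectivization ℝ Pt), R.ncard = n ∧
      ∀ i j : ZMod n, i ≠ j → ∃ h : v i - v j ≠ 0, Projectivization.mk ℝ (v i - v j) h ∈ R :=
  stmt18_general n hn v hv
end
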